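/- arXiv:2405.03467 — 11 statements merged into one kernel-verified Lean document; each statement's English description precedes it below -/
import Mathlib

section
/- For any connected graph G on m vertices and any instance with n agents having additive utilities, the egalitarian price of connectivity is at most m - n + 1. Concretely: if an allocation (M_1,...,M_n) achieves egalitarian welfare W > 0, then each bundle M_i is nonempty with at most m - n + 1 items, so giving each agent her most valued item from M_i yields each agent utility at least W/(m-n+1), and this partial allocation extends to a connected allocation. -/
/-- A bundle is connected if it is empty or induces a connected subgraph. -/
def ConnB {V : Type*} (G : SimpleGraph V) (s : Finset V) : Prop :=
  s = ∅ ∨ (G.induce (s : Set V)).Connected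

/-- An allocation: a partition of the vertex set into `n` (possibly empty) bundles. -/
def IsAlloc {V : Type*} [Fintype V] [DecidableEq V] {n : ℕ} (A : Fin n → Finset V) : Prop :=
  (∀ i j : Fin n, i ≠ j → Disjoint (A i) (A j)) ∧ Finset.univ.biUnion A = Finset.univ

/-!
Since `W > 0`, every bundle `A i` is nonempty, so each has at most `m - n + 1` items and
contains one item worth at least `W / (m - n + 1)` to its owner. The singletons of these items
are disjoint and connected, and on a connected graph disjoint connected bundles can be grown,
one adjacent vertex at a time, into a connected allocation.
-/

open Finset Function

namespace SimpleGraph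

variable {V : Type*} {G : SimpleGraph V}

lemma Connected.exists_adj_mem_not_mem (hG : G.Connected) {s : Set V} {x y : V}
    (hx : x ∈ s) (hy : y ∉ s) : ∃ a ∈ s, ∃ b ∉ s, G.Adj a b := by
  obtain ⟨d, -, hd₁, hd₂⟩ := (hG.preconnected x y).some.exists_boundary_dart s hx hy
  exact ⟨d.fst, hd₁, d.snd, hd₂, d.adj⟩

lemma Connected.induce_insert {s : Set V} {a b : V} (hs : (G.induce s).Connected)
    (ha : a ∈ s) (hab : G.Adj a b) : (G.induce (insert b s)).Connected := by
  rw [← Set.singleton_union]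
  exact connected_induce_union (by simp : (G.induce {b}).Connected).preconnected hs.preconnected
    rfl ha hab.symm

end SimpleGraph

section UpdateInsert

variable {ι α : Type*} [DecidableEq ι] [DecidableEq α] {B : ι → Finset α} {b : α}

lemma subset_update_insert (i j : ι) : B j ⊆ update B i (insert b (B i)) j := by
  rcases eq_or_ne j i with rfl | hji
  · simp
  · simp [hji]

lemma pairwise_disjoint_update_insert (hB : Pairwise (Disjoint on B)) (hb : ∀ j, b ∉ B j)
    (i : ι) : Pairwise (Disjoint on update B i (insert b (B i))) := by
  intro j k hjk
  have := hB hjk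
  simp only [onFun] at this ⊢
  rcases eq_or_ne j i with rfl | hji
  · simpa [hjk.symm, hb k] using this
  rcases eq_or_ne k i with rfl | hki
  · simpa [hji, hb j] using this
  · simpa [hji, hki] using this

lemma biUnion_update_insert [Fintype ι] (i : ι) :
    univ.biUnion (update B i (insert b (B i))) = insert b (univ.biUnion B) := by
  apply Subset.antisymm
  · intro x hx
    obtain ⟨j, -, hj⟩ := mem_biUnion.mp hx
    rcases eq_or_ne j i with rfl | hji
    · rcases mem_insert.mp (by simpa using hj) with rfl | hx
      · exact mem_insert_self _ _
      · exact mem_insert_of_mem (mem_biUnion.mpr ⟨j, mem_univ _, hx⟩)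
    · exact mem_insert_of_mem (mem_biUnion.mpr ⟨j, mem_univ _, by simpa [hji] using hj⟩)
  · refine insert_subset (mem_biUnion.mpr ⟨i, mem_univ _, by simp⟩) ?_
    exact biUnion_mono fun j _ => subset_update_insert i j

end UpdateInsert

theorem SimpleGraph.Connected.exists_connected_partition_superset {ι V : Type*} [Fintype ι]
    [DecidableEq ι] [Nonempty ι] [Fintype V] [DecidableEq V] {G : SimpleGraph V}
    (hG : G.Connected) (B : ι → Finset V) (hB : Pairwise (Disjoint on B))
    (hBconn : ∀ i, (G.induce (B i : Set V)).Connected) :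
    ∃ C : ι → Finset V, (∀ i, B i ⊆ C i) ∧ Pairwise (Disjoint on C) ∧
      univ.biUnion C = univ ∧ ∀ i, (G.induce (C i : Set V)).Connected := by
  obtain ⟨k, hk⟩ : ∃ k, (univ \ univ.biUnion B).card = k := ⟨_, rfl⟩
  induction k generalizing B with
  | zero =>
    exact ⟨B, fun _ => subset_rfl, hB, by simpa using card_eq_zero.mp hk, hBconn⟩
  | succ k ih =>
    obtain ⟨y, hy⟩ : (univ \ univ.biUnion B).Nonempty := by rw [← card_pos]; omega
    obtain ⟨i₀⟩ := ‹Nonempty ι›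
    obtain ⟨x, hx⟩ := (hBconn i₀).nonempty
    obtain ⟨a, ha, b, hb, hab⟩ := hG.exists_adj_mem_not_mem (s := ↑(univ.biUnion B))
      (mem_coe.mpr (mem_biUnion.mpr ⟨i₀, mem_univ _, hx⟩)) (by simpa using hy)
    obtain ⟨i, -, hai⟩ := mem_biUnion.mp ha
    have hb' : ∀ j, b ∉ B j := fun j hj => hb (mem_biUnion.mpr ⟨j, mem_univ _, hj⟩)
    have hB'conn : ∀ j, (G.induce (update B i (insert b (B i)) j : Set V)).Connected := by
      intro j
      rcases eq_or_ne j i with rfl | hji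
      · rw [update_self, coe_insert]
        exact (hBconn j).induce_insert hai hab
      · rw [update_of_ne hji]
        exact hBconn j
    have hk' : (univ \ univ.biUnion (update B i (insert b (B i)))).card = k := by
      rw [biUnion_update_insert, sdiff_insert, card_erase_of_mem (by simpa using hb), hk]
      rfl
    obtain ⟨C, hBC, hC⟩ := ih _ (pairwise_disjoint_update_insert hB hb' i) hB'conn hk'
    exact ⟨C, fun j => (subset_update_insert i j).trans (hBC j), hC⟩

lemma card_add_card_sub_one_le_card_biUnion {ι α : Type*} [Fintype ι] [DecidableEq α]
    {A : ι → Finset α} (hA : Pairwise (Disjoint on A)) (hne : ∀ i, (A i).Nonempty) (i : ι) :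
    (A i).card + (Fintype.card ι - 1) ≤ (univ.biUnion A).card := by
  classical
  rw [card_biUnion fun j _ k _ hjk => hA hjk, ← add_sum_erase _ _ (mem_univ i)]
  gcongr
  calc Fintype.card ι - 1 = ∑ _j ∈ univ.erase i, 1 := by simp [card_erase_of_mem]
    _ ≤ ∑ j ∈ univ.erase i, (A j).card := sum_le_sum fun j _ => card_pos.mpr (hne j)

lemma exists_mem_div_card_le_of_le_sum {α : Type*} {s : Finset α} (hs : s.Nonempty)
    {f : α → ℝ} {W : ℝ} (hW : W ≤ ∑ v ∈ s, f v) : ∃ v ∈ s, W / s.card ≤ f v := by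
  refine exists_le_of_sum_le hs ?_
  rwa [sum_const, nsmul_eq_mul, mul_div_cancel₀ _ (by simpa using hs.ne_empty)]

theorem egal_poc_upper_any_graph_general {V : Type*} [Fintype V] [DecidableEq V]
    (G : SimpleGraph V) (hG : G.Connected) (m n : ℕ)
    (hm : Fintype.card V = m) (hn1 : 1 ≤ n)
    (u : Fin n → V → ℝ) (hu : ∀ i v, 0 ≤ u i v)
    (A : Fin n → Finset V) (hA : IsAlloc A)
    (W : ℝ) (hW0 : 0 < W) (hW : ∀ i, W ≤ ∑ v ∈ A i, u i v) :
    ∃ B : Fin n → Finset V, IsAlloc B ∧ (∀ i, ConnB G (B i)) ∧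
      ∀ i, W / ((m - n + 1 : ℕ) : ℝ) ≤ ∑ v ∈ B i, u i v := by
  obtain ⟨hAdisj, hAcover⟩ := hA
  have hAne : ∀ i, (A i).Nonempty := fun i =>
    nonempty_of_sum_ne_zero (hW0.trans_le (hW i)).ne'
  have hAcard : ∀ i, (A i).card ≤ m - n + 1 := fun i => by
    have := card_add_card_sub_one_le_card_biUnion hAdisj hAne i
    rw [hAcover, card_univ, hm, Fintype.card_fin] at this
    omega
  have hbest : ∀ i, ∃ v ∈ A i, W / ((m - n + 1 : ℕ) : ℝ) ≤ u i v := fun i => by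
    obtain ⟨v, hv, hvW⟩ := exists_mem_div_card_le_of_le_sum (hAne i) (hW i)
    refine ⟨v, hv, le_trans ?_ hvW⟩
    exact div_le_div_of_nonneg_left hW0.le (by simpa using hAne i) (by exact_mod_cast hAcard i)
  choose v hvA hvW using hbest
  have hv : Pairwise (Disjoint on fun i => ({v i} : Finset V)) := fun i j hij =>
    disjoint_singleton.mpr fun h => disjoint_left.mp (hAdisj i j hij) (hvA i) (h ▸ hvA j)
  have : Nonempty (Fin n) := ⟨⟨0, hn1⟩⟩
  obtain ⟨B, hvB, hBdisj, hBcover, hBconn⟩ := hG.exists_connected_partition_superset _ hv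
    fun i => by rw [coe_singleton]; simp
  refine ⟨B, ⟨fun i j hij => hBdisj hij, hBcover⟩, fun i => Or.inr (hBconn i), fun i => ?_⟩
  exact (hvW i).trans (single_le_sum (fun w _ => hu i w) (hvB i (mem_singleton_self _)))

/-- for any connected graph on `m` vertices and `n ≤ m` agents with additive
nonnegative utilities, if an allocation achieves egalitarian welfare `W > 0`, then there is a
connected allocation giving every agent utility at least `W / (m - n + 1)`; hence the
egalitarian price of connectivity is at most `m - n + 1`. -/
theorem egal_poc_upper_any_graph {V : Type*} [Fintype V] [DecidableEq V]
    (G : SimpleGraph V) (hG : G.Connected) (m n : ℕ)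
    (hm : Fintype.card V = m) (hn1 : 1 ≤ n) (hnm : n ≤ m)
    (u : Fin n → V → ℝ) (hu : ∀ i v, 0 ≤ u i v)
    (A : Fin n → Finset V) (hA : IsAlloc A)
    (W : ℝ) (hW0 : 0 < W) (hW : ∀ i, W ≤ ∑ v ∈ A i, u i v) :
    ∃ B : Fin n → Finset V, IsAlloc B ∧ (∀ i, ConnB G (B i)) ∧
      ∀ i, W / ((m - n + 1 : ℕ) : ℝ) ≤ ∑ v ∈ B i, u i v :=
  egal_poc_upper_any_graph_general G hG m n hm hn1 u hu A hA W hW0 hW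
end

section
/- Reduction lemma for egalitarian PoC: let β ∈ (0,1] and G a connected graph. Suppose that for every (not necessarily normalized) instance in which every vertex is positively valued by at most one agent, there exists a connected allocation whose egalitarian welfare is at least β times the optimal (unconstrained) egalitarian welfare of that instance. Then for every instance (with arbitrary utilities), there exists a connected allocation whose egalitarian welfare is at least β times the optimal egalitarian welfare; hence the egalitarian price of connectivity of G is at most 1/β. -/
/-- reduction lemma: let `β ∈ (0,1]`.  If for every (not necessarily normalized)
nonnegative instance in which each vertex is positively valued by at most one agent, every
egalitarian-welfare value `W` achieved by some allocation can be matched up to factor `β` by a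
connected allocation, then the same holds for arbitrary nonnegative instances; hence the
egalitarian price of connectivity of `G` is at most `1/β`. -/
theorem egal_poc_reduction {V : Type*} [Fintype V] [DecidableEq V]
    (G : SimpleGraph V) (hG : G.Connected) (n : ℕ) (β : ℝ) (hβ0 : 0 < β) (hβ1 : β ≤ 1)
    (H : ∀ u : Fin n → V → ℝ, (∀ i v, 0 ≤ u i v) →
      (∀ v : V, ∀ i j : Fin n, 0 < u i v → 0 < u j v → i = j) →
      ∀ A : Fin n → Finset V, IsAlloc A → ∀ W : ℝ, (∀ i, W ≤ ∑ v ∈ A i, u i v) →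
        ∃ B : Fin n → Finset V, IsAlloc B ∧ (∀ i, ConnB G (B i)) ∧
          ∀ i, β * W ≤ ∑ v ∈ B i, u i v) :
    ∀ u : Fin n → V → ℝ, (∀ i v, 0 ≤ u i v) →
      ∀ A : Fin n → Finset V, IsAlloc A → ∀ W : ℝ, (∀ i, W ≤ ∑ v ∈ A i, u i v) →
        ∃ B : Fin n → Finset V, IsAlloc B ∧ (∀ i, ConnB G (B i)) ∧
          ∀ i, β * W ≤ ∑ v ∈ B i, u i v := by
  intro u hu A hA W hW
  set u' : Fin n → V → ℝ := fun i v => if v ∈ A i then u i v else 0 with hu'def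
  have hu'nonneg : ∀ i v, 0 ≤ u' i v := by
    intro i v
    simp only [hu'def]
    split <;> [exact hu i v; rfl]
  have hsingle : ∀ v : V, ∀ i j : Fin n, 0 < u' i v → 0 < u' j v → i = j := by
    intro v i j hi hj
    by_contra hij
    have hvi : v ∈ A i := by
      by_contra h; simp only [hu'def, if_neg h] at hi; exact lt_irrefl 0 hi
    have hvj : v ∈ A j := by
      by_contra h; simp only [hu'def, if_neg h] at hj; exact lt_irrefl 0 hj
    exact (hA.1 i j hij).forall_ne_finset hvi hvj rfl
  have hW' : ∀ i, W ≤ ∑ v ∈ A i, u' i v := by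
    intro i
    have : ∑ v ∈ A i, u' i v = ∑ v ∈ A i, u i v :=
      Finset.sum_congr rfl (fun v hv => by simp [hu'def, hv])
    rw [this]; exact hW i
  obtain ⟨B, hBalloc, hBconn, hBval⟩ := H u' hu'nonneg hsingle A hA W hW'
  refine ⟨B, hBalloc, hBconn, fun i => ?_⟩
  refine (hBval i).trans (Finset.sum_le_sum fun v _ => ?_)
  simp only [hu'def]
  split <;> [exact le_refl _; exact hu i v]
end

section
/- If a connected graph G on m vertices admits a bipolar ordering, then for two agents the egalitarian price of connectivity of G is at most 2. Concretely: for any instance with two agents where each vertex is positively valued by at most one agent, taking the least prefix {1,...,k} of the bipolar ordering worth at least u_i(G)/2 to some agent i, and giving the complement to the other agent j, yields a connected allocation in which agent i gets at least u_i(G)/2 and agent j gets at least u_j(G)/2. -/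
/-- A bipolar ordering of `G` on `m = card V` vertices: a bijection `σ : Fin m ≃ V` such that
every vertex with label `i ∈ {2,…,m-1}` (0-indexed: `0 < i < m-1`) is adjacent to some vertex
with a larger label and some vertex with a smaller label. -/
def IsBipolarOrdering {V : Type*} [Fintype V] (G : SimpleGraph V)
    (σ : Fin (Fintype.card V) ≃ V) : Prop :=
  ∀ i : Fin (Fintype.card V), 0 < i.val → i.val + 1 < Fintype.card V →
    (∃ j : Fin (Fintype.card V), i < j ∧ G.Adj (σ i) (σ j)) ∧
    (∃ j : Fin (Fintype.card V), j < i ∧ G.Adj (σ i) (σ j))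

/-!
Take the least `k` such that the first `k` vertices are worth half of her total to some agent
`i`. The `k`-th vertex `w` must then have positive value for `i`, hence value `0` for every other
agent `j`; so `j` values the first `k` vertices exactly as the first `k - 1`, i.e. at less than
half, and the remaining vertices at least at half. Both parts are connected because prefixes of
a bipolar ordering are connected (each new vertex has an earlier neighbour), and suffixes are
prefixes of the reversed ordering, which is again bipolar.
-/

open Finset

namespace SimpleGraph

variable {V : Type*}

lemma Connected.induce_insert_s2 {G : SimpleGraph V} {s : Set V} (hs : (G.induce s).Connected)
    {v w : V} (hw : w ∈ s) (hvw : G.Adj v w) : (G.induce (insert v s)).Connected := by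
  have hunion : insert v s = {v, w} ∪ s := by
    rw [Set.insert_union, Set.singleton_union, Set.insert_eq_of_mem hw]
  rw [hunion]
  exact induce_union_connected (induce_pair_connected_of_adj hvw).preconnected hs.preconnected
    ⟨w, by simp, hw⟩

end SimpleGraph

section Segments

variable {V : Type*} [Fintype V]

def initialSegment (σ : Fin (Fintype.card V) ≃ V) (k : ℕ) : Finset V :=
  univ.filter fun v => (σ.symm v : ℕ) < k

def finalSegment (σ : Fin (Fintype.card V) ≃ V) (k : ℕ) : Finset V :=
  univ.filter fun v => ¬ (σ.symm v : ℕ) < k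

variable (σ : Fin (Fintype.card V) ≃ V)

@[simp]
lemma mem_initialSegment {k : ℕ} {v : V} : v ∈ initialSegment σ k ↔ (σ.symm v : ℕ) < k := by
  simp [initialSegment]

lemma initialSegment_zero : initialSegment σ 0 = ∅ := by
  ext v; simp

lemma initialSegment_card : initialSegment σ (Fintype.card V) = univ := by
  ext v; simp

lemma initialSegment_succ [DecidableEq V] {k : ℕ} (hk : k < Fintype.card V) :
    initialSegment σ (k + 1) = insert (σ ⟨k, hk⟩) (initialSegment σ k) := by
  ext v
  simp only [mem_insert, mem_initialSegment, ← Equiv.symm_apply_eq, Fin.ext_iff]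
  omega

lemma finalSegment_eq_initialSegment_rev (k : ℕ) :
    finalSegment σ k = initialSegment (Fin.revPerm.trans σ) (Fintype.card V - k) := by
  ext v
  have hv := (σ.symm v).isLt
  simp only [finalSegment, not_lt, mem_filter, mem_univ, true_and, mem_initialSegment,
    Equiv.symm_trans, Fin.revPerm_symm, Equiv.trans_apply, Fin.revPerm_apply, Fin.val_rev]
  omega

lemma sum_initialSegment_add_sum_finalSegment {M : Type*} [AddCommMonoid M] (f : V → M)
    (k : ℕ) :
    ∑ v ∈ initialSegment σ k, f v + ∑ v ∈ finalSegment σ k, f v = ∑ v, f v :=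
  sum_filter_add_sum_filter_not _ _ _

end Segments

namespace IsBipolarOrdering

open SimpleGraph

variable {V : Type*} [Fintype V] {G : SimpleGraph V} {σ : Fin (Fintype.card V) ≃ V}

lemma rev (hσ : IsBipolarOrdering G σ) : IsBipolarOrdering G (Fin.revPerm.trans σ) := by
  intro i hi0 hi
  have hrev := Fin.val_rev i
  obtain ⟨⟨j, hj, hadj⟩, ⟨j', hj', hadj'⟩⟩ := hσ i.rev (by omega) (by omega)
  exact ⟨⟨j'.rev, Fin.lt_rev_iff.2 hj', by simpa using hadj'⟩,
    ⟨j.rev, Fin.rev_lt_iff.2 hj, by simpa using hadj⟩⟩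

lemma connected_induce_initialSegment_succ (hσ : IsBipolarOrdering G σ) :
    ∀ {k : ℕ}, k + 1 < Fintype.card V →
      (G.induce (initialSegment σ (k + 1) : Set V)).Connected
  | 0, hk => by
    classical
    rw [initialSegment_succ σ (by omega), initialSegment_zero, insert_empty, coe_singleton]
    exact .of_subsingleton
  | k + 1, hk => by
    classical
    obtain ⟨-, j, hjk, hadj⟩ := hσ ⟨k + 1, by omega⟩ k.succ_pos hk
    rw [initialSegment_succ σ (by omega), coe_insert]
    exact (connected_induce_initialSegment_succ hσ (by omega)).induce_insert_s2
      ((mem_initialSegment σ).2 (by simpa using Fin.lt_def.1 hjk)) hadj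

lemma connected_induce_initialSegment (hG : G.Connected) (hσ : IsBipolarOrdering G σ) {k : ℕ}
    (hk0 : 0 < k) (hk : k ≤ Fintype.card V) :
    (G.induce (initialSegment σ k : Set V)).Connected := by
  rcases hk.eq_or_lt with rfl | hk
  · rw [initialSegment_card, coe_univ]
    exact (induceUnivIso G).connected_iff.2 hG
  · obtain ⟨k, rfl⟩ := Nat.exists_eq_succ_of_ne_zero hk0.ne'
    exact hσ.connected_induce_initialSegment_succ hk

lemma connB_initialSegment (hG : G.Connected) (hσ : IsBipolarOrdering G σ) {k : ℕ}
    (hk : k ≤ Fintype.card V) : ConnB G (initialSegment σ k) := by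
  rcases Nat.eq_zero_or_pos k with rfl | hk0
  · exact .inl (initialSegment_zero σ)
  · exact .inr (hσ.connected_induce_initialSegment hG hk0 hk)

lemma connB_finalSegment (hG : G.Connected) (hσ : IsBipolarOrdering G σ) (k : ℕ) :
    ConnB G (finalSegment σ k) := by
  rw [finalSegment_eq_initialSegment_rev]
  exact hσ.rev.connB_initialSegment hG (Nat.sub_le _ _)

end IsBipolarOrdering

theorem exists_initialSegment_finalSegment_half_le {ι V : Type*} [Fintype V] [Nonempty ι]
    (σ : Fin (Fintype.card V) ≃ V) {u : ι → V → ℝ} (hu : ∀ i v, 0 ≤ u i v)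
    (hone : ∀ v i j, 0 < u i v → 0 < u j v → i = j) :
    ∃ k ≤ Fintype.card V, ∃ i, (∑ v, u i v) / 2 ≤ ∑ v ∈ initialSegment σ k, u i v ∧
      ∀ j ≠ i, (∑ v, u j v) / 2 ≤ ∑ v ∈ finalSegment σ k, u j v := by
  classical
  have htotal (i : ι) : 0 ≤ ∑ v, u i v := sum_nonneg fun v _ => hu i v
  have hcard : ∃ i, (∑ v, u i v) / 2 ≤ ∑ v ∈ initialSegment σ (Fintype.card V), u i v :=
    ⟨Classical.arbitrary ι, by rw [initialSegment_card]; linarith [htotal (Classical.arbitrary ι)]⟩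
  have hex : ∃ k, ∃ i, (∑ v, u i v) / 2 ≤ ∑ v ∈ initialSegment σ k, u i v := ⟨_, hcard⟩
  obtain ⟨i, hi⟩ := Nat.find_spec hex
  have hfind_le := Nat.find_min' hex hcard
  refine ⟨Nat.find hex, hfind_le, i, hi, fun j hji => ?_⟩
  suffices ∑ v ∈ initialSegment σ (Nat.find hex), u j v ≤ (∑ v, u j v) / 2 by
    linarith [sum_initialSegment_add_sum_finalSegment σ (u j) (Nat.find hex)]
  have hbelow (k : ℕ) (hk : k < Nat.find hex) (i' : ι) :
      ∑ v ∈ initialSegment σ k, u i' v < (∑ v, u i' v) / 2 :=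
    lt_of_not_ge fun h => Nat.find_min hex hk ⟨i', h⟩
  rcases hk : Nat.find hex with _ | k
  · rw [initialSegment_zero, sum_empty]
    linarith [htotal j]
  rw [hk] at hi hfind_le
  rw [initialSegment_succ σ hfind_le, sum_insert (by simp)] at hi ⊢
  have hwi : 0 < u i (σ ⟨k, hfind_le⟩) := by linarith [hbelow k (by omega) i]
  have hwj : u j (σ ⟨k, hfind_le⟩) ≤ 0 := not_lt.1 fun hpos => hji (hone _ _ _ hpos hwi)
  linarith [hbelow k (by omega) j]

theorem egal_poc_bipolar_general {V : Type*} [Fintype V]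
    (G : SimpleGraph V) (hG : G.Connected)
    (σ : Fin (Fintype.card V) ≃ V) (hσ : IsBipolarOrdering G σ)
    (u : Fin 2 → V → ℝ) (hu : ∀ i v, 0 ≤ u i v)
    (hone : ∀ v : V, ∀ i j : Fin 2, 0 < u i v → 0 < u j v → i = j) :
    ∃ k : ℕ, k ≤ Fintype.card V ∧ ∃ i j : Fin 2, i ≠ j ∧
      (ConnB G (Finset.univ.filter (fun v : V => (σ.symm v).val < k))) ∧
      (ConnB G (Finset.univ.filter (fun v : V => ¬ (σ.symm v).val < k))) ∧
      (∑ v : V, u i v) / 2 ≤ ∑ v ∈ Finset.univ.filter (fun v : V => (σ.symm v).val < k), u i v ∧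
      (∑ v : V, u j v) / 2 ≤
        ∑ v ∈ Finset.univ.filter (fun v : V => ¬ (σ.symm v).val < k), u j v := by
  obtain ⟨k, hk, i, hi, hfinal⟩ := exists_initialSegment_finalSegment_half_le σ hu hone
  obtain ⟨j, hji⟩ := exists_ne i
  exact ⟨k, hk, i, j, hji.symm, hσ.connB_initialSegment hG hk, hσ.connB_finalSegment hG k, hi,
    hfinal j hji⟩

/-- if a connected graph admits a bipolar ordering, then for two agents whose
utilities are nonnegative and such that each vertex is positively valued by at most one agent,
there is a prefix `{v : σ.symm v < k}` of the ordering and an assignment of the prefix to one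
agent and the complementary suffix to the other, forming a connected allocation in which each
agent receives at least half of her value for the whole graph.  Hence the egalitarian price of
connectivity is at most `2`. -/
theorem egal_poc_bipolar {V : Type*} [Fintype V] [DecidableEq V]
    (G : SimpleGraph V) (hG : G.Connected)
    (σ : Fin (Fintype.card V) ≃ V) (hσ : IsBipolarOrdering G σ)
    (u : Fin 2 → V → ℝ) (hu : ∀ i v, 0 ≤ u i v)
    (hone : ∀ v : V, ∀ i j : Fin 2, 0 < u i v → 0 < u j v → i = j) :
    ∃ k : ℕ, k ≤ Fintype.card V ∧ ∃ i j : Fin 2, i ≠ j ∧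
      (ConnB G (Finset.univ.filter (fun v : V => (σ.symm v).val < k))) ∧
      (ConnB G (Finset.univ.filter (fun v : V => ¬ (σ.symm v).val < k))) ∧
      (∑ v : V, u i v) / 2 ≤ ∑ v ∈ Finset.univ.filter (fun v : V => (σ.symm v).val < k), u i v ∧
      (∑ v : V, u j v) / 2 ≤
        ∑ v ∈ Finset.univ.filter (fun v : V => ¬ (σ.symm v).val < k), u j v :=
  egal_poc_bipolar_general G hG σ hσ u hu hone
end

section
/- If a connected graph G is not 2-linked, then for two agents the egalitarian price of connectivity of G is at least 2. Concretely: for disjoint vertex pairs (a,b) and (c,d) witnessing non-2-linkedness, the instance where agent 1 values a and b at 1/2 each and agent 2 values c and d at 1/2 each has unconstrained optimal egalitarian welfare 1, but every connected allocation has egalitarian welfare at most 1/2. -/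
theorem sum_ite_eq_or_eq {V M : Type*} [DecidableEq V] [AddCommMonoid M] (s : Finset V)
    {x y : V} (hxy : x ≠ y) (r : M) :
    ∑ v ∈ s, (if v = x ∨ v = y then r else 0)
      = (if x ∈ s then r else 0) + (if y ∈ s then r else 0) := by
  have hsplit : ∀ v ∈ s, (if v = x ∨ v = y then r else 0)
      = (if v = x then r else 0) + (if v = y then r else 0) := by
    intro v _
    by_cases hx : v = x <;> by_cases hy : v = y <;> simp_all
  rw [Finset.sum_congr rfl hsplit, Finset.sum_add_distrib, Finset.sum_ite_eq', Finset.sum_ite_eq']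

theorem sum_half_pair_eq_one {V : Type*} [DecidableEq V] {s : Finset V} {x y : V}
    (hxy : x ≠ y) (hx : x ∈ s) (hy : y ∈ s) :
    ∑ v ∈ s, (if v = x ∨ v = y then (1 : ℝ) / 2 else 0) = 1 := by
  rw [sum_ite_eq_or_eq s hxy, if_pos hx, if_pos hy]
  norm_num

theorem mem_and_mem_of_half_lt_sum {V : Type*} [DecidableEq V] {s : Finset V} {x y : V}
    (hxy : x ≠ y) (h : 1 / 2 < ∑ v ∈ s, (if v = x ∨ v = y then (1 : ℝ) / 2 else 0)) :
    x ∈ s ∧ y ∈ s := by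
  rw [sum_ite_eq_or_eq s hxy] at h
  constructor <;> by_contra hnot <;> simp only [hnot, if_false] at h <;> split_ifs at h <;>
    linarith

theorem isAlloc_compl {V : Type*} [Fintype V] [DecidableEq V] (s : Finset V) :
    IsAlloc ![s, sᶜ] := by
  refine ⟨fun i j hij => ?_, ?_⟩
  · fin_cases i <;> fin_cases j <;> simp_all [disjoint_compl_right, disjoint_compl_left]
  · ext v
    simp [Fin.exists_fin_two, em]

theorem SimpleGraph.Connected.exists_walk_support_subset_of_induce {V : Type*}
    {G : SimpleGraph V} {s : Set V} (hs : (G.induce s).Connected) {x y : V}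
    (hx : x ∈ s) (hy : y ∈ s) : ∃ p : G.Walk x y, ∀ v ∈ p.support, v ∈ s := by
  obtain ⟨q⟩ := hs ⟨x, hx⟩ ⟨y, hy⟩
  refine ⟨q.map (SimpleGraph.Embedding.induce s).toHom, fun v hv => ?_⟩
  replace hv : v ∈ (q.map (SimpleGraph.Embedding.induce s).toHom).support := hv
  rw [SimpleGraph.Walk.support_map, List.mem_map] at hv
  obtain ⟨⟨w, hw⟩, _, rfl⟩ := hv
  exact hw

theorem ConnB.exists_walk_support_subset {V : Type*} {G : SimpleGraph V} {s : Finset V}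
    (hs : ConnB G s) {x y : V} (hx : x ∈ s) (hy : y ∈ s) :
    ∃ p : G.Walk x y, ∀ v ∈ p.support, v ∈ s := by
  rcases hs with rfl | hconn
  · exact absurd hx (Finset.notMem_empty x)
  · exact hconn.exists_walk_support_subset_of_induce (Finset.mem_coe.2 hx) (Finset.mem_coe.2 hy)

theorem exists_disjoint_walks_of_connB {V : Type*} {G : SimpleGraph V} {s t : Finset V}
    (hst : Disjoint s t) (hs : ConnB G s) (ht : ConnB G t) {a b c d : V}
    (ha : a ∈ s) (hb : b ∈ s) (hc : c ∈ t) (hd : d ∈ t) :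
    ∃ (p : G.Walk a b) (q : G.Walk c d), p.support.Disjoint q.support := by
  obtain ⟨p, hp⟩ := hs.exists_walk_support_subset ha hb
  obtain ⟨q, hq⟩ := ht.exists_walk_support_subset hc hd
  exact ⟨p, q, fun v hvp hvq => Finset.disjoint_left.mp hst (hp v hvp) (hq v hvq)⟩

theorem egal_poc_not_two_linked_general {V : Type*} [Fintype V] [DecidableEq V]
    (G : SimpleGraph V)
    (a b c d : V) (hnodup : ([a, b, c, d] : List V).Nodup)
    (hlink : ¬ ∃ (p : G.Walk a b) (q : G.Walk c d), p.support.Disjoint q.support)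
    (u : Fin 2 → V → ℝ)
    (hu0 : ∀ v, u 0 v = if v = a ∨ v = b then (1 : ℝ) / 2 else 0)
    (hu1 : ∀ v, u 1 v = if v = c ∨ v = d then (1 : ℝ) / 2 else 0) :
    (∃ A : Fin 2 → Finset V, IsAlloc A ∧ ∀ i, ∑ v ∈ A i, u i v = 1) ∧
    (∀ B : Fin 2 → Finset V, IsAlloc B → (∀ i, ConnB G (B i)) →
      ∃ i, ∑ v ∈ B i, u i v ≤ 1 / 2) := by
  simp only [List.nodup_cons, List.mem_cons, List.not_mem_nil,
    List.nodup_nil, or_false, not_or] at hnodup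
  obtain ⟨⟨hab, hac, had⟩, ⟨hbc, hbd⟩, hcd, -⟩ := hnodup
  simp only [Fin.forall_fin_two, Fin.exists_fin_two, hu0, hu1]
  constructor
  · refine ⟨![{a, b}, {a, b}ᶜ], isAlloc_compl _, ?_, ?_⟩
    · exact sum_half_pair_eq_one hab (by simp) (by simp)
    · exact sum_half_pair_eq_one hcd (by simp [Ne.symm hac, Ne.symm hbc])
        (by simp [Ne.symm had, Ne.symm hbd])
  · intro B hB hconn
    by_contra! hgt
    obtain ⟨ha, hb⟩ := mem_and_mem_of_half_lt_sum hab hgt.1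
    obtain ⟨hc, hd⟩ := mem_and_mem_of_half_lt_sum hcd hgt.2
    exact hlink (exists_disjoint_walks_of_connB (hB.1 0 1 (by decide)) hconn.1 hconn.2
      ha hb hc hd)

/-- if `G` is not 2-linked, witnessed by disjoint pairs `(a,b)` and `(c,d)` with no
two vertex-disjoint connecting paths, then in the instance where agent 1 values `a, b` at `1/2`
each and agent 2 values `c, d` at `1/2` each, the unconstrained optimal egalitarian welfare is
`1` (some allocation gives both agents utility `1`), but every connected allocation has
egalitarian welfare at most `1/2`.  Hence the egalitarian price of connectivity is at least 2. -/
theorem egal_poc_not_two_linked {V : Type*} [Fintype V] [DecidableEq V]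
    (G : SimpleGraph V) (hG : G.Connected)
    (a b c d : V) (hnodup : ([a, b, c, d] : List V).Nodup)
    (hlink : ¬ ∃ (p : G.Walk a b) (q : G.Walk c d), p.support.Disjoint q.support)
    (u : Fin 2 → V → ℝ)
    (hu0 : ∀ v, u 0 v = if v = a ∨ v = b then (1 : ℝ) / 2 else 0)
    (hu1 : ∀ v, u 1 v = if v = c ∨ v = d then (1 : ℝ) / 2 else 0) :
    (∃ A : Fin 2 → Finset V, IsAlloc A ∧ ∀ i, ∑ v ∈ A i, u i v = 1) ∧
    (∀ B : Fin 2 → Finset V, IsAlloc B → (∀ i, ConnB G (B i)) →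
      ∃ i, ∑ v ∈ B i, u i v ≤ 1 / 2) :=
  egal_poc_not_two_linked_general G a b c d hnodup hlink u hu0 hu1
end

section
/- Egalitarian PoC of a star: for a star graph G with m vertices (one center connected to m−1 leaves) and n ≥ 2 agents with n ≤ m, the egalitarian price of connectivity equals m − n + 1. For the lower bound: in the instance where one agent values m − n + 1 leaves at 1/(m−n+1) each and each of the other n−1 agents values a distinct remaining vertex at 1, the unconstrained optimal egalitarian welfare is 1 while every connected allocation has egalitarian welfare at most 1/(m−n+1). -/
/-- The star on `m` vertices: vertex `0` is the center, adjacent to all other vertices. -/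
def starGraph (m : ℕ) : SimpleGraph (Fin m) where
  Adj x y := x ≠ y ∧ (x.val = 0 ∨ y.val = 0)
  symm := ⟨by rintro x y ⟨h1, h2⟩; exact ⟨h1.symm, h2.symm⟩⟩
  loopless := ⟨by rintro x ⟨h1, _⟩; exact h1 rfl⟩

/-! If every agent gets at least `W` in some allocation, all bundles are nonempty, so each has at
most `m - n + 1` items and contains an item worth at least `W / (m - n + 1)` to its owner. Every
agent keeps such an item and the owner of the center takes everything else, which is connected.

Conversely, a connected bundle avoiding the center is at most a single leaf. If agent `1` values
only the center and agent `0` values `m - n + 1` leaves uniformly, then either agent `1` misses the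
center and gets `0`, or agent `0` gets at most one leaf, worth `1 / (m - n + 1)`. -/

open Finset

section Graph

variable {V : Type*} {G : SimpleGraph V}

lemma SimpleGraph.induce_connected_of_forall_adj {s : Set V} {c : V} (hc : c ∈ s)
    (hadj : ∀ v ∈ s, v ≠ c → G.Adj v c) : (G.induce s).Connected := by
  have : Nonempty s := ⟨⟨c, hc⟩⟩
  have hreach (x : s) : (G.induce s).Reachable x ⟨c, hc⟩ := by
    by_cases hx : (x : V) = c
    · rw [show x = ⟨c, hc⟩ from Subtype.ext hx]
    · exact SimpleGraph.Adj.reachable (hadj x x.2 hx)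
  exact ⟨fun x y => (hreach x).trans (hreach y).symm⟩

lemma connB_of_card_le_one (G : SimpleGraph V) {s : Finset V} (hs : #s ≤ 1) : ConnB G s := by
  rcases s.eq_empty_or_nonempty with rfl | ⟨a, ha⟩
  · exact Or.inl rfl
  · have : Nonempty (s : Set V) := ⟨⟨a, ha⟩⟩
    have : Subsingleton (s : Set V) := card_le_one_iff_subsingleton_coe.mp hs
    exact Or.inr .of_subsingleton

lemma ConnB.card_le_one_of_forall_not_adj {s : Finset V} (h : ConnB G s)
    (hs : ∀ x ∈ s, ∀ y ∈ s, ¬G.Adj x y) : #s ≤ 1 := by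
  rcases h with rfl | h
  · simp
  have hbot : G.induce (s : Set V) = ⊥ := by
    ext x y
    exact iff_of_false (hs x x.2 y y.2) id
  rw [hbot, SimpleGraph.connected_bot_iff] at h
  exact card_le_one_iff_subsingleton_coe.mpr h.1

end Graph

section Star

variable {m : ℕ} {s : Finset (Fin m)}

lemma starGraph_connB_of_zero_mem [NeZero m] (h : 0 ∈ s) : ConnB (starGraph m) s :=
  Or.inr <| SimpleGraph.induce_connected_of_forall_adj h fun _ _ hv => ⟨hv, Or.inr rfl⟩

lemma starGraph_card_le_one_of_connB [NeZero m] (h : ConnB (starGraph m) s) (h0 : 0 ∉ s) :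
    #s ≤ 1 := by
  refine h.card_le_one_of_forall_not_adj fun x hx y hy ⟨_, hxy⟩ => h0 ?_
  rcases hxy with hx0 | hy0
  · rwa [← Fin.val_eq_zero_iff.mp hx0]
  · rwa [← Fin.val_eq_zero_iff.mp hy0]

end Star

section Alloc

variable {V : Type*} {n : ℕ}

def fibers [Fintype V] (o : V → Fin n) (i : Fin n) : Finset V := {v | o v = i}

@[simp]
lemma mem_fibers [Fintype V] {o : V → Fin n} {i : Fin n} {v : V} : v ∈ fibers o i ↔ o v = i := by
  simp [fibers]

lemma isAlloc_fibers [Fintype V] [DecidableEq V] (o : V → Fin n) : IsAlloc (fibers o) :=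
  ⟨fun _ _ hij => disjoint_left.mpr fun _ hi hj => hij ((mem_fibers.mp hi).symm.trans
      (mem_fibers.mp hj)),
    eq_univ_of_forall fun v => mem_biUnion.mpr ⟨o v, mem_univ _, mem_fibers.mpr rfl⟩⟩

lemma IsAlloc.exists_eq_fibers [Fintype V] [DecidableEq V] {A : Fin n → Finset V}
    (hA : IsAlloc A) : ∃ o : V → Fin n, A = fibers o := by
  have hcover (v : V) : ∃ i, v ∈ A i := by
    simpa using (hA.2.symm ▸ mem_univ v : v ∈ univ.biUnion A)
  choose o ho using hcover
  refine ⟨o, funext fun i => ext fun v => ⟨fun hv => mem_fibers.mpr ?_, ?_⟩⟩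
  · by_contra hne
    exact disjoint_left.mp (hA.1 _ _ hne) (ho v) hv
  · intro hv
    rw [← mem_fibers.mp hv]
    exact ho v

lemma card_fibers_le_of_forall_nonempty [Fintype V] {o : V → Fin n} (hne : ∀ i, (fibers o i).Nonempty)
    (i : Fin n) : #(fibers o i) ≤ Fintype.card V - n + 1 := by
  have htotal : ∑ j, #(fibers o j) = Fintype.card V := by
    simpa [fibers] using (card_eq_sum_card_fiberwise (f := o) (s := univ) (t := univ)
      (fun _ _ => mem_univ _)).symm
  have hothers : #(univ.erase i) • 1 ≤ ∑ j ∈ univ.erase i, #(fibers o j) :=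
    card_nsmul_le_sum _ _ _ fun j _ => (hne j).card_pos
  rw [← add_sum_erase _ _ (mem_univ i)] at htotal
  simp only [card_erase_of_mem (mem_univ i), card_univ, Fintype.card_fin, smul_eq_mul,
    mul_one] at hothers
  have := (hne i).card_pos
  omega

noncomputable def uniformUtil [DecidableEq V] (A : Fin n → Finset V) (i : Fin n) (v : V) : ℝ :=
  if v ∈ A i then (#(A i) : ℝ)⁻¹ else 0

lemma uniformUtil_nonneg [DecidableEq V] (A : Fin n → Finset V) (i : Fin n) (v : V) :
    0 ≤ uniformUtil A i v := by
  unfold uniformUtil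
  split_ifs <;> positivity

lemma sum_uniformUtil [DecidableEq V] (A : Fin n → Finset V) (i : Fin n) (s : Finset V) :
    ∑ v ∈ s, uniformUtil A i v = #(s ∩ A i) / #(A i) := by
  simp [uniformUtil, div_eq_mul_inv]

lemma sum_uniformUtil_self [DecidableEq V] {A : Fin n → Finset V} {i : Fin n}
    (h : (A i).Nonempty) : ∑ v ∈ A i, uniformUtil A i v = 1 := by
  rw [sum_uniformUtil, inter_self, div_self (by exact_mod_cast h.card_pos.ne')]

lemma sum_univ_uniformUtil [Fintype V] [DecidableEq V] {A : Fin n → Finset V} {i : Fin n}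
    (h : (A i).Nonempty) : ∑ v, uniformUtil A i v = 1 := by
  rw [sum_uniformUtil, univ_inter, ← sum_uniformUtil_self h, sum_uniformUtil, inter_self]

end Alloc

lemma Finset.exists_div_le_of_le_sum {α : Type*} {s : Finset α} {f : α → ℝ} {W : ℝ} {k : ℕ}
    (hW : 0 ≤ W) (hs : s.Nonempty) (hk : #s ≤ k) (h : W ≤ ∑ v ∈ s, f v) :
    ∃ v ∈ s, W / k ≤ f v := by
  refine exists_le_of_sum_le hs (le_trans ?_ h)
  have hk0 : (0 : ℝ) < k := by exact_mod_cast hs.card_pos.trans_le hk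
  calc ∑ _ ∈ s, W / k = #s * (W / k) := by rw [sum_const, nsmul_eq_mul]
    _ ≤ k * (W / k) := by gcongr
    _ = W := mul_div_cancel₀ W hk0.ne'

section StarAlloc

variable {m n : ℕ} [NeZero m]

lemma starGraph_exists_connB_alloc_ge_div [NeZero n] (u : Fin n → Fin m → ℝ)
    (hu : ∀ i v, 0 ≤ u i v) {A : Fin n → Finset (Fin m)} (hA : IsAlloc A) {W : ℝ}
    (hW : ∀ i, W ≤ ∑ v ∈ A i, u i v) :
    ∃ B : Fin n → Finset (Fin m), IsAlloc B ∧ (∀ i, ConnB (starGraph m) (B i)) ∧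
      ∀ i, W / ((m - n + 1 : ℕ) : ℝ) ≤ ∑ v ∈ B i, u i v := by
  obtain ⟨o, rfl⟩ := hA.exists_eq_fibers
  rcases le_or_gt W 0 with hW0 | hW0
  · refine ⟨fibers fun _ => 0, isAlloc_fibers _, fun i => ?_, fun i =>
      (div_nonpos_of_nonpos_of_nonneg hW0 (Nat.cast_nonneg _)).trans
        (sum_nonneg fun v _ => hu i v)⟩
    rcases eq_or_ne i 0 with rfl | hi
    · exact starGraph_connB_of_zero_mem (mem_fibers.mpr rfl)
    · exact Or.inl (eq_empty_of_forall_notMem fun v hv => hi (mem_fibers.mp hv).symm)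
  have hne (i : Fin n) : (fibers o i).Nonempty :=
    nonempty_of_sum_ne_zero (hW0.trans_le (hW i)).ne'
  have hcard (i : Fin n) : #(fibers o i) ≤ m - n + 1 := by
    simpa using card_fibers_le_of_forall_nonempty hne i
  choose b hb hbW using fun i => exists_div_le_of_le_sum hW0.le (hne i) (hcard i) (hW i)
  -- every agent keeps a best item of her bundle; the owner of the center takes all the rest
  let o' : Fin m → Fin n := fun v => if b (o v) = v then o v else o 0
  have hbo' (i : Fin n) : o' (b i) = i := by
    simp [o', mem_fibers.mp (hb i)]
  refine ⟨fibers o', isAlloc_fibers o', fun i => ?_, fun i => ?_⟩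
  · rcases eq_or_ne i (o 0) with rfl | hi
    · exact starGraph_connB_of_zero_mem (by simp [o'])
    · have hsub : fibers o' i ⊆ {b i} := fun v hv => by
        simp only [mem_fibers, o'] at hv
        split_ifs at hv with hbv
        · exact mem_singleton.mpr (hv ▸ hbv).symm
        · exact absurd hv.symm hi
      exact connB_of_card_le_one _ ((card_le_card hsub).trans (card_singleton _).le)
  · calc W / ((m - n + 1 : ℕ) : ℝ) ≤ u i (b i) := hbW i
      _ ≤ ∑ v ∈ fibers o' i, u i v :=
        single_le_sum (fun v _ => hu i v) (mem_fibers.mpr (hbo' i))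

lemma starGraph_exists_sum_uniformUtil_le {A B : Fin n → Finset (Fin m)} {i₀ i₁ : Fin n}
    (h : i₀ ≠ i₁) (hA : A i₁ ⊆ {0}) (hB : IsAlloc B) (hconn : ∀ i, ConnB (starGraph m) (B i)) :
    ∃ i, ∑ v ∈ B i, uniformUtil A i v ≤ (#(A i₀) : ℝ)⁻¹ := by
  by_cases h0 : (0 : Fin m) ∈ B i₀
  · refine ⟨i₁, ?_⟩
    have hempty : B i₁ ∩ A i₁ = ∅ := eq_empty_of_forall_notMem fun v hv => by
      obtain ⟨hvB, hvA⟩ := mem_inter.mp hv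
      rw [mem_singleton.mp (hA hvA)] at hvB
      exact disjoint_left.mp (hB.1 _ _ h) h0 hvB
    rw [sum_uniformUtil, hempty, card_empty, Nat.cast_zero, zero_div]
    positivity
  · refine ⟨i₀, ?_⟩
    have hcard : #(B i₀ ∩ A i₀) ≤ 1 := (card_le_card inter_subset_left).trans
      (starGraph_card_le_one_of_connB (hconn i₀) h0)
    calc ∑ v ∈ B i₀, uniformUtil A i₀ v = #(B i₀ ∩ A i₀) * (#(A i₀) : ℝ)⁻¹ := by
          rw [sum_uniformUtil, div_eq_mul_inv]
      _ ≤ 1 * (#(A i₀) : ℝ)⁻¹ := by gcongr; exact_mod_cast hcard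
      _ = (#(A i₀) : ℝ)⁻¹ := one_mul _

end StarAlloc

section Instance

variable {m n : ℕ} [NeZero n]

-- Vertex `v < n - 1` goes to agent `v + 1`, so agent `1` gets the center and agent `0` the
-- `m - n + 1` leaves `v ≥ n - 1`.
def starOwner (n m : ℕ) [NeZero n] (v : Fin m) : Fin n :=
  if h : v.val + 1 < n then ⟨v.val + 1, h⟩ else 0

lemma fibers_starOwner_nonempty (hnm : n ≤ m) (i : Fin n) :
    (fibers (starOwner n m) i).Nonempty := by
  have hn := Nat.pos_of_neZero n
  rcases eq_or_ne i 0 with rfl | hi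
  · exact ⟨⟨n - 1, by omega⟩, mem_fibers.mpr (dif_neg (by simp only; omega))⟩
  · have hi' : i.val ≠ 0 := Fin.val_ne_zero_iff.mpr hi
    exact ⟨⟨i - 1, by omega⟩,
      mem_fibers.mpr ((dif_pos (by simp only; omega)).trans (Fin.ext (by simp only; omega)))⟩

lemma fibers_starOwner_one_subset [NeZero m] (hn : 1 < n) :
    fibers (starOwner n m) ⟨1, hn⟩ ⊆ {0} := by
  intro v hv
  simp only [mem_fibers, starOwner] at hv
  split_ifs at hv
  · exact mem_singleton.mpr (Fin.ext (by simpa using congrArg Fin.val hv))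
  · exact absurd (congrArg Fin.val hv) (by simp)

lemma card_fibers_starOwner_zero (hnm : n ≤ m) :
    #(fibers (starOwner n m) 0) = m - n + 1 := by
  have hn := Nat.pos_of_neZero n
  have hIci : fibers (starOwner n m) 0 = Ici ⟨n - 1, by omega⟩ := by
    ext v
    simp [starOwner, Fin.le_def]
  rw [hIci, Fin.card_Ici, Fin.val_mk]
  omega

end Instance

/-- for a star on `m` vertices and `2 ≤ n ≤ m` agents with normalized utilities,
the egalitarian price of connectivity equals `m - n + 1`: (upper bound) any egalitarian welfare
`W` achievable by an allocation can be matched up to factor `1/(m-n+1)` by a connected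
allocation; (lower bound) there is a normalized instance in which some allocation gives every
agent utility `1`, while every connected allocation gives some agent at most `1/(m-n+1)`. -/
theorem egal_poc_star (m n : ℕ) (hn : 2 ≤ n) (hnm : n ≤ m) :
    (∀ u : Fin n → Fin m → ℝ, (∀ i v, 0 ≤ u i v) → (∀ i, ∑ v, u i v = 1) →
      ∀ A : Fin n → Finset (Fin m), IsAlloc A → ∀ W : ℝ, (∀ i, W ≤ ∑ v ∈ A i, u i v) →
        ∃ B : Fin n → Finset (Fin m), IsAlloc B ∧ (∀ i, ConnB (starGraph m) (B i)) ∧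
          ∀ i, W / ((m - n + 1 : ℕ) : ℝ) ≤ ∑ v ∈ B i, u i v) ∧
    (∃ u : Fin n → Fin m → ℝ, (∀ i v, 0 ≤ u i v) ∧ (∀ i, ∑ v, u i v = 1) ∧
      (∃ A : Fin n → Finset (Fin m), IsAlloc A ∧ ∀ i, ∑ v ∈ A i, u i v = 1) ∧
      (∀ B : Fin n → Finset (Fin m), IsAlloc B → (∀ i, ConnB (starGraph m) (B i)) →
        ∃ i, ∑ v ∈ B i, u i v ≤ 1 / ((m - n + 1 : ℕ) : ℝ))) := by
  have : NeZero n := ⟨by omega⟩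
  have : NeZero m := ⟨by omega⟩
  refine ⟨fun u hu _ A hA W hW => starGraph_exists_connB_alloc_ge_div u hu hA hW, ?_⟩
  let A := fibers (starOwner n m)
  have hne := fibers_starOwner_nonempty hnm
  refine ⟨uniformUtil A, uniformUtil_nonneg A, fun i => sum_univ_uniformUtil (hne i),
    ⟨A, isAlloc_fibers _, fun i => sum_uniformUtil_self (hne i)⟩, fun B hB hconn => ?_⟩
  obtain ⟨i, hi⟩ := starGraph_exists_sum_uniformUtil_le (i₀ := 0) (Fin.ne_of_val_ne (by simp))
    (fibers_starOwner_one_subset hn) hB hconn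
  exact ⟨i, by rwa [card_fibers_starOwner_zero hnm, ← one_div] at hi⟩
end

section
/- Moving-knife bound for paths: let G be a path on m vertices, n ≥ 2 agents with additive utilities such that each vertex is positively valued by at most one agent, and let W denote the optimal (unconstrained) egalitarian welfare. Then there exists a partition of the path into n contiguous intervals (some possibly empty) and an assignment of intervals to agents such that every agent's utility for her interval is at least W/n. -/
/-! Moving knife: sweep the path from the left and stop as soon as some agent values the swept
interval at `t = W / n`; she takes it. The vertex just swept is valued by her alone, so every
other agent values the swept interval at most `t` and keeps at least `(n - 1) t` on the rest of
the path, where the argument recurses. -/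

open Finset

def zeroExtend {M : Type*} [Zero M] {m : ℕ} (f : Fin m → M) (v : ℕ) : M :=
  if h : v < m then f ⟨v, h⟩ else 0

theorem sum_filter_fin_eq_sum_Ico_zeroExtend {M : Type*} [AddCommMonoid M] {m : ℕ}
    (f : Fin m → M) (a b : ℕ) :
    ∑ v ∈ univ.filter (fun v : Fin m => a ≤ v.val ∧ v.val < b), f v =
      ∑ v ∈ Ico a b, zeroExtend f v := by
  refine sum_bij_ne_zero (fun v _ _ => v.val) (fun v hv _ => by simpa using hv)
    (fun _ _ _ _ _ _ h => Fin.ext h) (fun v hv hne => ?_) (fun v _ _ => by simp [zeroExtend])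
  have hvm : v < m := by by_contra h; simp [zeroExtend, h] at hne
  exact ⟨⟨v, hvm⟩, by simpa using hv, by simpa [zeroExtend, hvm] using hne, rfl⟩

/-- Interval `k` is `Ico (c k.castSucc) (c k.succ)`, and agent `i` receives interval `σ i`. -/
def FairCuts {n : ℕ} (u : Fin n → ℕ → ℝ) (t : ℝ) (a b : ℕ) : Prop :=
  ∃ c : Fin (n + 1) → ℕ, Monotone c ∧ c 0 = a ∧ c (Fin.last n) = b ∧
    ∃ σ : Equiv.Perm (Fin n), ∀ i, t ≤ ∑ v ∈ Ico (c (σ i).castSucc) (c (σ i).succ), u i v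

theorem fairCuts_zero (u : Fin 0 → ℕ → ℝ) (t : ℝ) (b : ℕ) : FairCuts u t b b :=
  ⟨fun _ => b, monotone_const, rfl, rfl, 1, fun i => i.elim0⟩

theorem FairCuts.cons {n : ℕ} {u : Fin (n + 1) → ℕ → ℝ} {t : ℝ} {a k b : ℕ} (i₀ : Fin (n + 1))
    (hak : a ≤ k) (hi₀ : t ≤ ∑ v ∈ Ico a k, u i₀ v)
    (hrest : FairCuts (fun j => u (i₀.succAbove j)) t k b) : FairCuts u t a b := by
  obtain ⟨c, hc, hc0, hcb, σ, hσ⟩ := hrest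
  refine ⟨Fin.cons a c, Fin.monotone_iff_le_succ.2 fun i => ?_, rfl, by simpa using hcb,
    (finSuccEquiv' i₀).trans ((Equiv.optionCongr σ).trans (finSuccEquiv n).symm),
    fun i => ?_⟩
  · cases i using Fin.cases with
    | zero => simpa [hc0] using hak
    | succ j => simpa [← Fin.succ_castSucc] using hc (Fin.castSucc_le_succ j)
  · cases i using Fin.succAboveCases i₀ with
    | x => simpa [finSuccEquiv'_at, hc0] using hi₀
    | p j => simpa [finSuccEquiv'_succAbove, ← Fin.succ_castSucc] using hσ j

theorem exists_knife_stop {ι : Type*} {u : ι → ℕ → ℝ}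
    (hone : ∀ v i j, 0 < u i v → 0 < u j v → i = j) {t : ℝ} (ht : 0 ≤ t) {a b : ℕ}
    (hab : a ≤ b) (i₀ : ι) (hi₀ : t ≤ ∑ v ∈ Ico a b, u i₀ v) :
    ∃ k, a ≤ k ∧ k ≤ b ∧ ∃ i, t ≤ ∑ v ∈ Ico a k, u i v ∧
      ∀ j ≠ i, ∑ v ∈ Ico a k, u j v ≤ t := by
  classical
  have hex : ∃ d, ∃ i, t ≤ ∑ v ∈ Ico a (a + d), u i v :=
    ⟨b - a, i₀, by rwa [Nat.add_sub_cancel' hab]⟩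
  obtain ⟨i, hi⟩ := Nat.find_spec hex
  have hle : Nat.find hex ≤ b - a := Nat.find_min' hex ⟨i₀, by rwa [Nat.add_sub_cancel' hab]⟩
  refine ⟨a + Nat.find hex, by omega, by omega, i, hi, fun j hj => ?_⟩
  cases hd : Nat.find hex with
  | zero => simpa using ht
  | succ d =>
    have hbelow : ∀ j, ∑ v ∈ Ico a (a + d), u j v < t := fun j =>
      not_le.1 fun h => (Nat.find_min hex (by omega)) ⟨j, h⟩
    rw [hd, ← add_assoc, sum_Ico_succ_top (by omega)] at hi
    rw [← add_assoc, sum_Ico_succ_top (by omega)]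
    have hpos : 0 < u i (a + d) := by linarith [hbelow i]
    have hzero : u j (a + d) ≤ 0 := not_lt.1 fun h => hj (hone _ _ _ h hpos)
    linarith [hbelow j]

theorem exists_fairCuts {n : ℕ} {u : Fin (n + 1) → ℕ → ℝ}
    (hone : ∀ v i j, 0 < u i v → 0 < u j v → i = j) {t : ℝ} (ht : 0 ≤ t) {a b : ℕ}
    (hab : a ≤ b) (hval : ∀ i, (n + 1) * t ≤ ∑ v ∈ Ico a b, u i v) : FairCuts u t a b := by
  induction n generalizing a with
  | zero => exact FairCuts.cons 0 hab (by simpa using hval 0) (fairCuts_zero _ t b)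
  | succ n ih =>
    have h₀ : t ≤ ∑ v ∈ Ico a b, u 0 v :=
      (le_mul_of_one_le_left ht (by linarith)).trans (hval 0)
    obtain ⟨k, hak, hkb, i, hi, hothers⟩ := exists_knife_stop hone ht hab 0 h₀
    refine FairCuts.cons i hak hi (ih
      (fun v _ _ h h' => Fin.succAbove_right_injective (hone v _ _ h h')) hkb fun j => ?_)
    have hsplit := hval (i.succAbove j)
    rw [← sum_Ico_consecutive _ hak hkb] at hsplit
    have hprefix := hothers _ (Fin.succAbove_ne i j)
    push_cast at hsplit ⊢
    linarith

theorem moving_knife_path_general (m n : ℕ) (hn : 2 ≤ n)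
    (u : Fin n → Fin m → ℝ) (hu : ∀ i v, 0 ≤ u i v)
    (hone : ∀ v : Fin m, ∀ i j : Fin n, 0 < u i v → 0 < u j v → i = j)
    (W : ℝ) (A : Fin n → Finset (Fin m))
    (hW : ∀ i, W ≤ ∑ v ∈ A i, u i v) :
    ∃ c : Fin (n + 1) → ℕ, Monotone c ∧ c 0 = 0 ∧ c (Fin.last n) = m ∧
      ∃ σ : Equiv.Perm (Fin n), ∀ i : Fin n,
        W / n ≤ ∑ v ∈ Finset.univ.filter
          (fun v : Fin m => c (σ i).castSucc ≤ v.val ∧ v.val < c (σ i).succ), u i v := by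
  obtain ⟨p, rfl⟩ : ∃ p, n = p + 1 := ⟨n - 1, by omega⟩
  have hone' : ∀ v i j, 0 < zeroExtend (u i) v → 0 < zeroExtend (u j) v → i = j := by
    intro v i j hi hj
    by_cases hv : v < m
    · simp only [zeroExtend, hv, dite_true] at hi hj
      exact hone _ i j hi hj
    · simp [zeroExtend, hv] at hi
  -- `W` may be negative, while the knife needs a nonnegative threshold.
  have hval : ∀ i, (p + 1) * max (W / (p + 1 : ℕ)) 0 ≤ ∑ v ∈ Ico 0 m, zeroExtend (u i) v := by
    intro i
    have htotal : W ≤ ∑ v, u i v :=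
      (hW i).trans (sum_le_sum_of_subset_of_nonneg (subset_univ _) fun v _ _ => hu i v)
    rw [← sum_filter_fin_eq_sum_Ico_zeroExtend, mul_max_of_nonneg _ _ (by positivity)]
    simp only [Nat.zero_le, Fin.is_lt, and_self, filter_true, mul_zero]
    push_cast
    rw [mul_div_cancel₀ _ (by positivity)]
    exact max_le htotal (sum_nonneg fun v _ => hu i v)
  obtain ⟨c, hc, hc0, hcm, σ, hσ⟩ := exists_fairCuts hone' (le_max_right _ 0) (Nat.zero_le m) hval
  refine ⟨c, hc, hc0, hcm, σ, fun i => ?_⟩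
  rw [sum_filter_fin_eq_sum_Ico_zeroExtend]
  exact (le_max_left _ _).trans (hσ i)

/-- moving knife on a path: vertices are `0,…,m-1` in path order, `n ≥ 2` agents
have additive nonnegative utilities with each vertex positively valued by at most one agent,
and `W` is achieved as the egalitarian welfare of some (unconstrained) allocation.  Then there
exist cut points `0 = c 0 ≤ c 1 ≤ ⋯ ≤ c n = m` and an assignment (permutation) `σ` of the `n`
contiguous intervals to the agents such that every agent values her interval at least `W/n`. -/
theorem moving_knife_path (m n : ℕ) (hn : 2 ≤ n)
    (u : Fin n → Fin m → ℝ) (hu : ∀ i v, 0 ≤ u i v)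
    (hone : ∀ v : Fin m, ∀ i j : Fin n, 0 < u i v → 0 < u j v → i = j)
    (W : ℝ) (A : Fin n → Finset (Fin m)) (hA : IsAlloc A)
    (hW : ∀ i, W ≤ ∑ v ∈ A i, u i v) :
    ∃ c : Fin (n + 1) → ℕ, Monotone c ∧ c 0 = 0 ∧ c (Fin.last n) = m ∧
      ∃ σ : Equiv.Perm (Fin n), ∀ i : Fin n,
        W / n ≤ ∑ v ∈ Finset.univ.filter
          (fun v : Fin m => c (σ i).castSucc ≤ v.val ∧ v.val < c (σ i).succ), u i v :=
  moving_knife_path_general m n hn u hu hone W A hW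
end

section
/- Egalitarian PoC lower bound for paths with many vertices: for a path on m ≥ 2n−1 vertices and n agents, the egalitarian price of connectivity is at least n. Witness instance: for i ∈ {1,...,n−1}, agent i values vertex 2i at 1; agent n values each vertex 2i−1 (i ∈ {1,...,n}) at 1/n. The unconstrained optimal egalitarian welfare is 1 while every connected allocation has egalitarian welfare at most 1/n. -/
/-- The path on `m` vertices `0 — 1 — ⋯ — (m-1)`. -/
def pathGraph (m : ℕ) : SimpleGraph (Fin m) where
  Adj x y := x.val + 1 = y.val ∨ y.val + 1 = x.val
  symm := ⟨by rintro x y (h | h); exacts [Or.inr h, Or.inl h]⟩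
  loopless := ⟨by rintro x (h | h) <;> omega⟩

/-!
Giving each odd vertex `2i + 1` to agent `i` and everything else to agent `n - 1` gives every
agent utility `1`, since agent `n - 1` then holds all `n` even vertices below `2n - 1`.
Connected bundles of a path are intervals, so in a connected allocation either agent `n - 1`
holds at most one of these even vertices (utility `≤ 1/n`), or her interval contains two of them
and hence the odd vertex `2a + 1` right after the first one, leaving agent `a` with utility `0`.
-/

open Finset

namespace pathGraph

variable {m : ℕ}

theorem mem_support_of_le_of_le {x y : Fin m} (w : (pathGraph m).Walk x y) {z : Fin m}
    (hxz : x.val ≤ z.val) (hzy : z.val ≤ y.val) : z ∈ w.support := by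
  induction w with
  | nil => simp [Fin.ext (le_antisymm hzy hxz)]
  | @cons a b c hab p ih =>
    by_cases hza : z = a
    · simp [hza]
    · have hbz : b.val ≤ z.val := by
        have : a.val ≠ z.val := fun h => hza (Fin.ext h.symm)
        rcases hab with h | h <;> omega
      simp [ih hbz hzy]

theorem mem_of_connB {s : Finset (Fin m)} (hs : ConnB (pathGraph m) s) {x y z : Fin m}
    (hx : x ∈ s) (hy : y ∈ s) (hxz : x.val ≤ z.val) (hzy : z.val ≤ y.val) : z ∈ s := by
  rcases hs with rfl | hc
  · simp at hx
  obtain ⟨w⟩ := hc.preconnected ⟨x, by simpa using hx⟩ ⟨y, by simpa using hy⟩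
  let incl : (pathGraph m).induce (s : Set (Fin m)) →g pathGraph m :=
    { toFun := Subtype.val, map_rel' := id }
  have hz := mem_support_of_le_of_le (w.map incl) hxz hzy
  rw [SimpleGraph.Walk.support_map] at hz
  obtain ⟨a, -, rfl⟩ := List.mem_map.mp hz
  exact mem_coe.mp a.2

end pathGraph

theorem isAlloc_fibers_s8 {V : Type*} [Fintype V] [DecidableEq V] {n : ℕ} (f : V → ℕ)
    (hf : ∀ v, f v < n) : IsAlloc fun i : Fin n => ({v | f v = i} : Finset V) := by
  refine ⟨fun i j hij => disjoint_filter.mpr fun v _ hi hj => hij (Fin.ext (hi ▸ hj)), ?_⟩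
  exact eq_univ_iff_forall.mpr fun v => mem_biUnion.mpr ⟨⟨f v, hf v⟩, mem_univ _, by simp⟩

theorem sum_ite_const_zero {ι R : Type*} [NonAssocSemiring R] (s : Finset ι) (p : ι → Prop)
    [DecidablePred p] (c : R) : ∑ v ∈ s, (if p v then c else 0) = #{v ∈ s | p v} * c := by
  rw [sum_ite, sum_const_zero, add_zero, sum_const, nsmul_eq_mul]

theorem sum_ite_val_eq {M : Type*} [AddCommMonoid M] {m k : ℕ} (hk : k < m)
    (s : Finset (Fin m)) (c : M) :
    ∑ v ∈ s, (if v.val = k then c else 0) = if (⟨k, hk⟩ : Fin m) ∈ s then c else 0 := by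
  have hval (v : Fin m) : v.val = k ↔ v = ⟨k, hk⟩ := by
    rw [Fin.ext_iff]
  simp_rw [hval]
  exact sum_ite_eq' s _ _

theorem card_filter_even_lt {m n : ℕ} (hm : 2 * n - 1 ≤ m) :
    #{v : Fin m | v.val % 2 = 0 ∧ v.val < 2 * n - 1} = n := by
  have hset : ({v : Fin m | v.val % 2 = 0 ∧ v.val < 2 * n - 1} : Finset (Fin m)) =
      univ.image fun j : Fin n => (⟨2 * j.val, by omega⟩ : Fin m) := by
    ext v
    simp only [mem_filter, mem_univ, true_and, mem_image, Fin.ext_iff]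
    constructor
    · rintro ⟨hv2, hvn⟩
      exact ⟨⟨v.val / 2, by omega⟩, by simp only; omega⟩
    · rintro ⟨j, hj⟩
      omega
  rw [hset, card_image_of_injective _ fun a b hab => Fin.ext (by simpa using hab), card_fin]

theorem exists_odd_mem_of_one_lt_card_even {m n : ℕ} {s : Finset (Fin m)}
    (hs : ConnB (pathGraph m) s) (h : 1 < #{v ∈ s | v.val % 2 = 0 ∧ v.val < 2 * n - 1}) :
    ∃ a < n - 1, ∃ ha : 2 * a + 1 < m, (⟨2 * a + 1, ha⟩ : Fin m) ∈ s := by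
  set evens := {v ∈ s | v.val % 2 = 0 ∧ v.val < 2 * n - 1}
  have hne : evens.Nonempty := card_pos.mp (by omega)
  set x := evens.min' hne
  obtain ⟨y, hy, hyx⟩ := exists_mem_ne h x
  have hxy : x.val < y.val := Fin.lt_def.mp (lt_of_le_of_ne (min'_le _ _ hy) hyx.symm)
  obtain ⟨hxs, hx2, -⟩ := mem_filter.mp (evens.min'_mem hne)
  obtain ⟨hys, hy2, hyn⟩ := mem_filter.mp hy
  refine ⟨x.val / 2, by omega, by omega, pathGraph.mem_of_connB hs hxs hys ?_ ?_⟩ <;>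
    simp only <;> omega

def oddOwner (n : ℕ) {m : ℕ} (v : Fin m) : ℕ :=
  if v.val % 2 = 1 ∧ v.val < 2 * n - 1 then v.val / 2 else n - 1

theorem oddOwner_lt {n m : ℕ} (hn : 0 < n) (v : Fin m) : oddOwner n v < n := by
  unfold oddOwner
  split_ifs <;> omega

theorem oddOwner_of_even {n m : ℕ} {v : Fin m} (hv : v.val % 2 = 0) : oddOwner n v = n - 1 :=
  if_neg (by omega)

theorem oddOwner_odd {n m a : ℕ} (ha : a < n - 1) (h : 2 * a + 1 < m) :
    oddOwner n (⟨2 * a + 1, h⟩ : Fin m) = a := by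
  unfold oddOwner
  dsimp only
  split_ifs <;> omega

/-- for a path on `m ≥ 2n - 1` vertices (0-indexed), in the instance where each
agent `i < n-1` values vertex `2i+1` at `1` and agent `n-1` values the `n` even-indexed vertices
`0, 2, …, 2n-2` at `1/n` each, some allocation gives every agent utility `1`, while every
connected allocation gives some agent at most `1/n`.  Hence the egalitarian price of
connectivity of the path is at least `n`. -/
theorem egal_poc_path_lower (m n : ℕ) (hn : 2 ≤ n) (hm : 2 * n - 1 ≤ m)
    (u : Fin n → Fin m → ℝ)
    (hu : ∀ i : Fin n, i.val < n - 1 → ∀ v : Fin m,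
      u i v = if v.val = 2 * i.val + 1 then (1 : ℝ) else 0)
    (hun : ∀ i : Fin n, i.val = n - 1 → ∀ v : Fin m,
      u i v = if v.val % 2 = 0 ∧ v.val < 2 * n - 1 then ((n : ℝ))⁻¹ else 0) :
    (∃ A : Fin n → Finset (Fin m), IsAlloc A ∧ ∀ i, ∑ v ∈ A i, u i v = 1) ∧
    (∀ B : Fin n → Finset (Fin m), IsAlloc B → (∀ i, ConnB (pathGraph m) (B i)) →
      ∃ i, ∑ v ∈ B i, u i v ≤ ((n : ℝ))⁻¹) := by
  have hn0 : (n : ℝ) ≠ 0 := by positivity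
  refine ⟨⟨_, isAlloc_fibers_s8 (oddOwner n) (oddOwner_lt (by omega)), fun i => ?_⟩, ?_⟩
  · rcases (Nat.le_sub_one_of_lt i.isLt).lt_or_eq with hi | hi
    · rw [sum_congr rfl fun v _ => hu i hi v, sum_ite_val_eq (by omega), if_pos]
      exact (mem_filter_univ _).mpr (oddOwner_odd hi _)
    · have hown : {v ∈ ({v | oddOwner n v = i} : Finset (Fin m)) | v.val % 2 = 0 ∧
          v.val < 2 * n - 1} = ({v | v.val % 2 = 0 ∧ v.val < 2 * n - 1} : Finset (Fin m)) := by
        rw [filter_filter]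
        exact filter_congr fun v _ =>
          and_iff_right_of_imp fun hv => (oddOwner_of_even hv.1).trans hi.symm
      rw [sum_congr rfl fun v _ => hun i hi v, sum_ite_const_zero, hown, card_filter_even_lt hm,
        mul_inv_cancel₀ hn0]
  · intro B hB hconn
    let last : Fin n := ⟨n - 1, by omega⟩
    by_cases hlast : #{v ∈ B last | v.val % 2 = 0 ∧ v.val < 2 * n - 1} ≤ 1
    · refine ⟨last, ?_⟩
      rw [sum_congr rfl fun v _ => hun last rfl v, sum_ite_const_zero]
      exact mul_le_of_le_one_left (by positivity) (by exact_mod_cast hlast)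
    · obtain ⟨a, ha, h2a, hmem⟩ :=
        exists_odd_mem_of_one_lt_card_even (hconn last) (not_le.mp hlast)
      let agent : Fin n := ⟨a, by omega⟩
      have hnot : (⟨2 * a + 1, h2a⟩ : Fin m) ∉ B agent :=
        disjoint_right.mp (hB.1 agent last (Fin.ne_of_val_ne (by simp [agent, last]; omega))) hmem
      refine ⟨agent, ?_⟩
      rw [sum_congr rfl fun v _ => hu agent ha v, sum_ite_val_eq h2a, if_neg hnot]
      positivity
end

section
/- Egalitarian PoC lower bound for cycles with m ≥ n²: for a cycle on m = n² vertices labeled 1,...,n² in cyclic order, where each agent i ∈ {1,...,n} values the n vertices (j−1)n + i (j ∈ {1,...,n}) at 1/n each, the unconstrained optimal egalitarian welfare is 1, but in every connected allocation some agent receives at most one of her valued vertices, so the egalitarian welfare under connectivity is at most 1/n. Hence the egalitarian PoC of the cycle is at least n. -/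
/-- The cycle on `m` vertices `0 — 1 — ⋯ — (m-1) — 0`. -/
def cycleGraph (m : ℕ) : SimpleGraph (Fin m) where
  Adj x y := x ≠ y ∧ ((x.val + 1) % m = y.val ∨ (y.val + 1) % m = x.val)
  symm := ⟨by rintro x y ⟨h1, h2⟩; exact ⟨h1.symm, h2.symm⟩⟩
  loopless := ⟨by rintro x ⟨h1, _⟩; exact h1 rfl⟩

/-!
Two vertices of the same agent are congruent mod `n`, hence at cyclic distance at least `n`. A
connected piece containing both must contain, for every `0 < j < n`, the vertex `j` steps before or
after the first one, since otherwise those two vertices cut it; so such a piece has at least `n + 1`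
vertices. If every agent got utility more than `1/n`, every piece would have two valued vertices,
and the `n` pieces would cover at least `n (n + 1) > n²` vertices.
-/

open Finset

variable {V : Type*}

theorem ConnB.imp_of_forall_adj {G : SimpleGraph V} {S : Finset V} (hS : ConnB G S)
    {P : V → Prop} (hP : ∀ a ∈ S, ∀ b ∈ S, G.Adj a b → P a → P b)
    {x y : V} (hx : x ∈ S) (hy : y ∈ S) (hPx : P x) : P y := by
  rcases hS with rfl | hS
  · simp at hx
  obtain ⟨w⟩ := hS.preconnected ⟨x, hx⟩ ⟨y, hy⟩
  by_contra hPy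
  obtain ⟨d, -, hd, hd'⟩ := w.exists_boundary_dart {v | P v.1} hPx hPy
  exact hd' (hP _ d.fst.2 _ d.snd.2 d.adj hd)

theorem IsAlloc.sum_card [Fintype V] [DecidableEq V] {n : ℕ} {A : Fin n → Finset V}
    (hA : IsAlloc A) : ∑ i, #(A i) = Fintype.card V := by
  rw [← card_biUnion fun i _ j _ hij => hA.1 i j hij, hA.2, card_univ]

theorem isAlloc_image_prod [Fintype V] [DecidableEq V] {κ : Type*} [Fintype κ] {n : ℕ}
    (e : κ × Fin n ≃ V) : IsAlloc fun i => univ.image fun k => e (k, i) := by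
  refine ⟨fun i j hij => disjoint_left.2 ?_, eq_univ_of_forall fun v => mem_biUnion.2
    ⟨(e.symm v).2, mem_univ _, mem_image.2 ⟨(e.symm v).1, mem_univ _, by simp⟩⟩⟩
  rintro _ hk hl
  obtain ⟨k, -, rfl⟩ := mem_image.1 hk
  obtain ⟨l, -, h⟩ := mem_image.1 hl
  exact hij (congrArg Prod.snd (e.injective h)).symm

theorem lt_card_of_forall_mem_or_sub_mem {O : Finset ℕ} {m d k : ℕ} (hd : d ∈ O) (hkd : k ≤ d)
    (hdk : d + k ≤ m) (h : ∀ j < k, j ∈ O ∨ m - j ∈ O) : k < #O := by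
  classical
  let f : ℕ → ℕ := fun j => if j = k then d else if j ∈ O then j else m - j
  calc k < #(range (k + 1)) := by simp
    _ ≤ #O := card_le_card_of_injOn f ?_ ?_
  · intro j hj
    simp only [coe_range, Set.mem_Iio] at hj
    simp only [f]
    split_ifs with hjk hjO
    · exact hd
    · exact hjO
    · exact (h j (by omega)).resolve_left hjO
  · intro i hi j hj hij
    simp only [coe_range, Set.mem_Iio] at hi hj
    simp only [f] at hij
    split_ifs at hij <;> omega

theorem Fin.le_sub_val_of_mod_eq {m n : ℕ} [NeZero m] (hnm : n ∣ m) {x y : Fin m} (hxy : x ≠ y)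
    (hmod : x.val % n = y.val % n) : n ≤ (y - x).val ∧ (y - x).val + n ≤ m := by
  set d := (y - x).val
  have hy : y.val = (x.val + d) % m := by rw [← Fin.val_add, add_sub_cancel]
  have hdvd : n ∣ d := by
    have : x.val + d ≡ x.val + 0 [MOD n] := by
      rw [Nat.ModEq, add_zero, hmod, hy, Nat.mod_mod_of_dvd _ hnm]
    exact Nat.modEq_zero_iff_dvd.1 (this.add_left_cancel' _)
  have hd : 0 < d := Nat.pos_of_ne_zero fun h => hxy (sub_eq_zero.1 (Fin.val_eq_zero_iff.1 h)).symm
  have hcodist : n ≤ m - d := Nat.le_of_dvd (Nat.sub_pos_of_lt (y - x).isLt) (Nat.dvd_sub hnm hdvd)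
  exact ⟨Nat.le_of_dvd hd hdvd, by omega⟩

namespace cycleGraph

variable {m : ℕ}

theorem adj_sub_right [NeZero m] {a b : Fin m} (x : Fin m) (h : (cycleGraph m).Adj a b) :
    (cycleGraph m).Adj (a - x) (b - x) := by
  refine ⟨fun e => h.1 (sub_left_inj.1 e), ?_⟩
  simp only [Fin.val_sub]
  rcases h.2 with h | h
  · left; rw [← h, Nat.mod_add_mod, Nat.add_mod_mod, add_assoc]
  · right; rw [← h, Nat.mod_add_mod, Nat.add_mod_mod, add_assoc]

theorem adj_val_cases {a b : Fin m} (h : (cycleGraph m).Adj a b) :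
    b.val = a.val + 1 ∨ a.val = b.val + 1 ∨
      (a.val + 1 = m ∧ b.val = 0) ∨ (b.val + 1 = m ∧ a.val = 0) := by
  have succ_mod (c : Fin m) : (c.val + 1) % m = c.val + 1 ∨ (c.val + 1 = m ∧ (c.val + 1) % m = 0) := by
    rcases Nat.lt_or_ge (c.val + 1) m with hc | hc
    · exact .inl (Nat.mod_eq_of_lt hc)
    · have hc : c.val + 1 = m := by omega
      exact .inr ⟨hc, by rw [hc, Nat.mod_self]⟩
  rcases h.2 with h | h
  · rcases succ_mod a with e | e <;> omega
  · rcases succ_mod b with e | e <;> omega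

end cycleGraph

section Cycle

variable {m : ℕ} [NeZero m] {S : Finset (Fin m)} {x y : Fin m}

/-- Offsets are measured from `x`; `m - j` is the offset of the vertex `j` steps before `x`. -/
theorem ConnB.mem_or_sub_mem_offsets (hS : ConnB (cycleGraph m) S) (hx : x ∈ S) (hy : y ∈ S)
    {j : ℕ} (hj : j < (y - x).val) (hjy : (y - x).val + j ≤ m) :
    j ∈ S.image (fun v => (v - x).val) ∨ m - j ∈ S.image (fun v => (v - x).val) := by
  rcases Nat.eq_zero_or_pos j with rfl | hj0
  · exact .inl (mem_image.2 ⟨x, hx, by simp⟩)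
  by_contra! hcut
  have hoff : ∀ v ∈ S, (v - x).val ≠ j ∧ (v - x).val ≠ m - j := fun v hv =>
    ⟨fun e => hcut.1 (mem_image.2 ⟨v, hv, e⟩), fun e => hcut.2 (mem_image.2 ⟨v, hv, e⟩)⟩
  -- the arc of offsets strictly between `m - j` and `j` (through `0`) is closed under adjacency in `S`
  have hclosed := hS.imp_of_forall_adj
    (P := fun v => (v - x).val < j ∨ m - j < (v - x).val) ?_ hx hy (by simp [hj0])
  · omega
  intro a ha b hb hab
  have := hoff a ha
  have := hoff b hb
  have := (a - x).isLt
  rcases cycleGraph.adj_val_cases (cycleGraph.adj_sub_right x hab) with h | h | h | h <;> omega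

theorem ConnB.lt_card_of_le_sub_val (hS : ConnB (cycleGraph m) S) (hx : x ∈ S) (hy : y ∈ S)
    {k : ℕ} (hkd : k ≤ (y - x).val) (hdk : (y - x).val + k ≤ m) : k < #S :=
  (lt_card_of_forall_mem_or_sub_mem (mem_image_of_mem _ hy) hkd hdk fun _ hj =>
    hS.mem_or_sub_mem_offsets hx hy (by omega) (by omega)).trans_le card_image_le

end Cycle

/-- on a cycle with `m = n²` vertices (labeled 0-indexed), where agent `i` values
the `n` vertices congruent to `i` mod `n` at `1/n` each, some allocation gives every agent
utility `1`, while every connected allocation gives some agent at most `1/n`.  Hence the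
egalitarian price of connectivity of the cycle is at least `n`. -/
theorem egal_poc_cycle_lower (n : ℕ) (hn : 2 ≤ n)
    (u : Fin n → Fin (n * n) → ℝ)
    (hu : ∀ (i : Fin n) (v : Fin (n * n)),
      u i v = if v.val % n = i.val then ((n : ℝ))⁻¹ else 0) :
    (∃ A : Fin n → Finset (Fin (n * n)), IsAlloc A ∧ ∀ i, ∑ v ∈ A i, u i v = 1) ∧
    (∀ B : Fin n → Finset (Fin (n * n)), IsAlloc B →
      (∀ i, ConnB (cycleGraph (n * n)) (B i)) →
      ∃ i, ∑ v ∈ B i, u i v ≤ ((n : ℝ))⁻¹) := by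
  have : NeZero n := ⟨by omega⟩
  have hn0 : (0 : ℝ) < n := by positivity
  constructor
  · refine ⟨fun i => univ.image fun k => finProdFinEquiv (k, i),
      isAlloc_image_prod finProdFinEquiv, fun i => ?_⟩
    have hres (k : Fin n) : (finProdFinEquiv (k, i)).val % n = i.val := by
      rw [finProdFinEquiv_apply_val, Nat.add_mul_mod_self_left, Nat.mod_eq_of_lt i.isLt]
    rw [sum_image fun k _ l _ h => by simpa using finProdFinEquiv.injective h]
    simp only [hu, hres, ↓reduceIte, sum_const, card_univ, Fintype.card_fin, nsmul_eq_mul]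
    exact mul_inv_cancel₀ hn0.ne'
  · intro B hB hconn
    by_contra! hrich
    have hbig (i : Fin n) : n < #(B i) := by
      have hsum : ∑ v ∈ B i, u i v = #{v ∈ B i | v.val % n = i.val} * (n : ℝ)⁻¹ := by
        simp only [hu]
        rw [← sum_filter, sum_const, nsmul_eq_mul]
      have htwo := (lt_mul_iff_one_lt_left (inv_pos.2 hn0)).1 (hsum ▸ hrich i)
      obtain ⟨x, hx, y, hy, hxy⟩ := one_lt_card.1 (by exact_mod_cast htwo)
      rw [mem_filter] at hx hy
      obtain ⟨hkd, hdk⟩ := Fin.le_sub_val_of_mod_eq (dvd_mul_left n n) hxy (hx.2.trans hy.2.symm)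
      exact (hconn i).lt_card_of_le_sub_val hx.1 hy.1 hkd hdk
    have hcover := hB.sum_card
    have : ∑ _i : Fin n, (n + 1) ≤ ∑ i, #(B i) := sum_le_sum fun i _ => hbig i
    simp only [sum_const, card_univ, Fintype.card_fin, smul_eq_mul] at this hcover
    nlinarith
end

section
/- Key inequality for the utilitarian PoC of trees: let T be a tree on m vertices, and for each vertex v let Δ_v ∈ ℝ with Σ_v Δ_v = 0 and Σ_v |Δ_v| ≤ 2. Let Δ be the maximum of |Σ_{v∈T'} Δ_v| over all subtrees T' such that both T' and its complement induce connected subgraphs (equivalently, over all 'halves' obtained by deleting one edge). Then Δ ≥ ( (m/2)·Σ_v |Δ_v| − (m−2) ) / (2m − 2). In particular, |Δ_v| ≤ deg(v)·Δ for every vertex v (by splitting around v into its deg(v) subtrees and the triangle inequality). -/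
/-!
Cutting a tree at a vertex `v` splits the other vertices into `deg v` branches, one per
neighbour, and each branch as well as its complement induces a connected subgraph. As the
`Δ`-values sum to zero, `Δ v` is minus the sum of the branch sums, whence `|Δ v| ≤ deg v · D`.
Summing over `v` with `∑ deg = 2(m - 1)` gives `S := ∑ |Δ| ≤ (2m - 2) D`, and
`(m/2) S - (m - 2) ≤ S` because `S ≤ 2`.
-/

open Finset

namespace SimpleGraph

variable {V : Type*} {G : SimpleGraph V} {u v w : V}

/-- `v` stays an isolated vertex of `G.deleteIncidenceSet v`, so for `u ≠ v` this is the vertex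
set of the component of `G - v` containing `u`. -/
def branch (G : SimpleGraph V) (v u : V) : Set V :=
  {w | (G.deleteIncidenceSet v).Reachable u w}

lemma self_mem_branch : u ∈ G.branch v u := Reachable.refl u

lemma notMem_branch (hu : u ≠ v) : v ∉ G.branch v u := by
  rintro ⟨p⟩
  cases p.reverse with
  | nil => exact hu rfl
  | cons h _ => exact (deleteIncidenceSet_adj.1 h).2.1 rfl

lemma connected_induce_branch : (G.induce (G.branch v u)).Connected := by
  have hC := ((G.deleteIncidenceSet v).connectedComponentMk u).maximal_connected_induce_supp.prop
  have hsupp : ((G.deleteIncidenceSet v).connectedComponentMk u).supp = G.branch v u := by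
    ext w
    simp [ConnectedComponent.mem_supp_iff, branch, ConnectedComponent.eq, reachable_comm]
  rw [hsupp] at hC
  exact hC.mono fun _ _ h ↦ G.deleteIncidenceSet_le v h

lemma IsAcyclic.disjoint_branch (hG : G.IsAcyclic) {u' : V} (hu : G.Adj v u) (hu' : G.Adj v u')
    (hne : u ≠ u') : Disjoint (G.branch v u) (G.branch v u') := by
  rw [Set.disjoint_left]
  intro w hw hw'
  obtain ⟨q⟩ : (G.deleteIncidenceSet v).Reachable u u' := hw.trans hw'.symm
  -- `s(v, u')` is a bridge of the forest, yet the walk `v, u, …, u'` avoids it.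
  have hbridge := isBridge_iff_forall_walk_mem_edges.1 (isAcyclic_iff_forall_adj_isBridge.1 hG hu')
    (.cons hu (q.mapLe (G.deleteIncidenceSet_le v)))
  rw [Walk.edges_cons, Walk.edges_mapLe_eq_edges, List.mem_cons] at hbridge
  rcases hbridge with h | h
  · exact hne (Sym2.congr_right.1 h).symm
  · have h' := q.edges_subset_edgeSet h
    rw [edgeSet_deleteIncidenceSet] at h'
    exact h'.2 ⟨hu', Sym2.mem_mk_left v u'⟩

lemma Connected.exists_adj_mem_branch (hG : G.Connected) (hw : w ≠ v) :
    ∃ u, G.Adj v u ∧ w ∈ G.branch v u := by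
  obtain ⟨p, hp⟩ := (hG.preconnected v w).exists_isPath
  cases p with
  | nil => exact absurd rfl hw
  | cons h q =>
    refine ⟨_, h, ⟨q.toDeleteEdges _ fun e he hev ↦ ?_⟩⟩
    exact ((Walk.cons_isPath_iff h q).1 hp).2 (q.mem_support_of_mem_edges he hev.2)

lemma IsTree.connected_induce_compl_branch (hG : G.IsTree) (hu : G.Adj v u) :
    (G.induce (G.branch v u)ᶜ).Connected := by
  have hv : v ∈ (G.branch v u)ᶜ := notMem_branch hu.ne'
  refine induce_connected_of_patches v hv fun {w} hw ↦ ?_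
  by_cases hwv : w = v
  · subst hwv
    exact ⟨{w}, by simpa using hv, rfl, rfl, Reachable.refl _⟩
  obtain ⟨u', hu', hw'⟩ := hG.connected.exists_adj_mem_branch hwv
  have hne : u ≠ u' := fun h ↦ hw (h ▸ hw')
  have hconn : (G.induce ({v} ∪ G.branch v u')).Connected :=
    connected_induce_union (by simp) connected_induce_branch.preconnected rfl self_mem_branch hu'
  refine ⟨{v} ∪ G.branch v u', ?_, by simp, by simp [hw'], hconn.preconnected _ _⟩
  exact Set.union_subset (by simpa using hv)
    (hG.isAcyclic.disjoint_branch hu hu' hne).symm.subset_compl_right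

section Finite

variable [Fintype V] [DecidableRel G.Adj]

theorem IsTree.sum_degrees_add_two (hG : G.IsTree) :
    ∑ v, G.degree v + 2 = 2 * Fintype.card V := by
  rw [sum_degrees_eq_twice_card_edges, ← hG.card_edgeFinset]
  ring

theorem IsTree.abs_le_degree_mul [DecidableEq V] {f : V → ℝ} {D : ℝ} (hG : G.IsTree)
    (hf : ∑ w, f w = 0)
    (hD : ∀ s : Finset V, s.Nonempty → sᶜ.Nonempty →
      (G.induce (s : Set V)).Connected → (G.induce ((sᶜ : Finset V) : Set V)).Connected →
      |∑ w ∈ s, f w| ≤ D) (v : V) :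
    |f v| ≤ G.degree v * D := by
  classical
  set N := G.neighborFinset v
  let B : V → Finset V := fun u ↦ (G.branch v u).toFinset
  have hB : ∀ u ∈ N, |∑ w ∈ B u, f w| ≤ D := by
    intro u hu
    rw [mem_neighborFinset] at hu
    refine hD _ ⟨u, by simp [B, self_mem_branch]⟩ ⟨v, by simp [B, notMem_branch hu.ne']⟩
      ?_ ?_
    · rw [Set.coe_toFinset]
      exact connected_induce_branch
    · rw [coe_compl, Set.coe_toFinset]
      exact hG.connected_induce_compl_branch hu
  have hdisj : (N : Set V).PairwiseDisjoint B := by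
    intro u hu u' hu' hne
    simpa [B] using
      hG.isAcyclic.disjoint_branch (by simpa [N] using hu) (by simpa [N] using hu') hne
  have hcover : N.biUnion B = univ.erase v := by
    ext w
    simp only [mem_biUnion, mem_erase, mem_univ, and_true, N, B, mem_neighborFinset,
      Set.mem_toFinset]
    constructor
    · rintro ⟨u, hu, hw⟩ rfl
      exact notMem_branch hu.ne' hw
    · exact hG.connected.exists_adj_mem_branch
  have hfv : f v = -∑ u ∈ N, ∑ w ∈ B u, f w := by
    rw [← sum_biUnion hdisj, hcover, eq_neg_iff_add_eq_zero, add_sum_erase _ _ (mem_univ v), hf]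
  calc |f v| = |∑ u ∈ N, ∑ w ∈ B u, f w| := by rw [hfv, abs_neg]
    _ ≤ ∑ u ∈ N, |∑ w ∈ B u, f w| := abs_sum_le_sum_abs _ _
    _ ≤ ∑ u ∈ N, D := sum_le_sum hB
    _ = G.degree v * D := by rw [sum_const, card_neighborFinset_eq_degree, nsmul_eq_mul]

end Finite

end SimpleGraph

/-- key inequality for the utilitarian PoC of trees: let `T` be a tree on `m ≥ 2`
vertices and `Δv : V → ℝ` with `∑ Δv = 0` and `∑ |Δv| ≤ 2`.  If `D` bounds `|∑_{v ∈ s} Δv v|`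
for every nonempty `s` with nonempty complement such that both `s` and its complement induce
connected subgraphs (the two halves obtained by deleting one edge), then
`D ≥ ((m/2)·∑|Δv| − (m−2)) / (2m−2)`, and moreover `|Δv v| ≤ deg(v)·D` for every vertex. -/
theorem tree_util_poc_key_inequality {V : Type*} [Fintype V] [DecidableEq V]
    (T : SimpleGraph V) [DecidableRel T.Adj] (hT : T.IsTree) (m : ℕ)
    (hm : Fintype.card V = m) (hm2 : 2 ≤ m)
    (Δv : V → ℝ) (hsum : ∑ v, Δv v = 0) (habs : ∑ v, |Δv v| ≤ 2)
    (D : ℝ)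
    (hub : ∀ s : Finset V, s.Nonempty → sᶜ.Nonempty →
      (T.induce (s : Set V)).Connected → (T.induce ((sᶜ : Finset V) : Set V)).Connected →
      |∑ v ∈ s, Δv v| ≤ D) :
    ((m : ℝ) / 2 * ∑ v, |Δv v| - ((m : ℝ) - 2)) / (2 * (m : ℝ) - 2) ≤ D ∧
    ∀ v : V, |Δv v| ≤ (T.degree v : ℝ) * D := by
  have hdeg : ∀ v, |Δv v| ≤ T.degree v * D := hT.abs_le_degree_mul hsum hub
  refine ⟨?_, hdeg⟩
  have hsum_abs : ∑ v, |Δv v| ≤ (2 * m - 2) * D := by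
    have hdeg_sum : ∑ v, (T.degree v : ℝ) + 2 = 2 * m := by
      exact_mod_cast hm ▸ hT.sum_degrees_add_two
    rw [show (2 * m - 2 : ℝ) = ∑ v, (T.degree v : ℝ) by linarith, sum_mul]
    exact sum_le_sum fun v _ ↦ hdeg v
  have hm2' : (2 : ℝ) ≤ m := by exact_mod_cast hm2
  rw [div_le_iff₀ (by linarith)]
  -- `(m/2) S - (m - 2) - S = (m - 2)(S - 2)/2 ≤ 0`
  nlinarith [mul_nonneg (sub_nonneg.2 hm2') (sub_nonneg.2 habs)]
end

section
/- Key inequality for the utilitarian PoC of even cycles: let Δ_1,...,Δ_{2k} be reals indexed around a cycle with Σ_i Δ_i = 0 and Σ_i |Δ_i| ≤ 2. Let Δ be the maximum of |Σ_{i∈P} Δ_i| over all arcs P of consecutive indices (cyclically). Then Δ ≥ (1 − k + ((k+1)/2)·Σ_i |Δ_i|) / (2k). Consequently (1 + (1/2)Σ_i|Δ_i|)/(1 + Δ) ≤ 2k/(k+1), i.e., the utilitarian price of connectivity of a cycle on 2k vertices for two agents is at most 2k/(k+1). -/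
/-- key inequality for the utilitarian PoC of even cycles: let `Δ` be a real
function on `2k` cyclically ordered indices with `∑ Δ = 0` and `∑ |Δ| ≤ 2`.  If `D` bounds
`|∑_{i ∈ P} Δ i|` for every nonempty arc `P` of cyclically consecutive indices, then
`D ≥ (1 − k + ((k+1)/2)·∑|Δ|) / (2k)`, and consequently
`(1 + (1/2)·∑|Δ|) / (1 + D) ≤ 2k/(k+1)`; i.e. the utilitarian price of connectivity of a cycle
on `2k` vertices for two agents is at most `2k/(k+1)`. -/
theorem even_cycle_util_poc_key_inequality (k : ℕ) (hk : 1 ≤ k)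
    (Δ : Fin (2 * k) → ℝ) (hsum : ∑ i, Δ i = 0) (habs : ∑ i, |Δ i| ≤ 2)
    (D : ℝ)
    (hub : ∀ (a : Fin (2 * k)) (ℓ : ℕ), 0 < ℓ → ℓ ≤ 2 * k →
      |∑ i ∈ Finset.univ.filter
        (fun i : Fin (2 * k) => ∃ t < ℓ, i.val = (a.val + t) % (2 * k)), Δ i| ≤ D) :
    (1 - (k : ℝ) + ((k : ℝ) + 1) / 2 * ∑ i, |Δ i|) / (2 * (k : ℝ)) ≤ D ∧
    (1 + (1 / 2) * ∑ i, |Δ i|) / (1 + D) ≤ 2 * (k : ℝ) / ((k : ℝ) + 1) := by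
  have hk2 : 0 < 2 * k := by omega
  -- singletons: |Δ a| ≤ D
  have hsingle : ∀ a : Fin (2 * k), |Δ a| ≤ D := by
    intro a
    have h := hub a 1 one_pos (by omega)
    simp only [Nat.lt_one_iff, exists_eq_left, Nat.add_zero, Nat.mod_eq_of_lt a.isLt,
      Fin.val_eq_val, Finset.filter_eq', Finset.mem_univ, if_true,
      Finset.sum_singleton] at h
    exact h
  have hD0 : 0 ≤ D := le_trans (abs_nonneg _) (hsingle ⟨0, hk2⟩)
  set A := ∑ i, |Δ i| with hA
  have hA0 : 0 ≤ A := Finset.sum_nonneg fun i _ => abs_nonneg _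
  have hAD : A ≤ 2 * k * D := by
    calc A ≤ ∑ _i : Fin (2 * k), D := Finset.sum_le_sum fun i _ => hsingle i
    _ = 2 * k * D := by simp [mul_comm]
  have hkR : (1 : ℝ) ≤ k := by exact_mod_cast hk
  have key : 1 - (k : ℝ) + ((k : ℝ) + 1) / 2 * A ≤ 2 * k * D := by
    nlinarith [hAD, habs, hA0, hkR]
  constructor
  · rw [div_le_iff₀ (by positivity)]
    linarith [key]
  · rw [div_le_div_iff₀ (by linarith) (by linarith)]
    nlinarith [key]
end

section
/- Utilitarian PoC lower bound for even cycles: on a cycle with 2k vertices, let agent 1 value each odd vertex at 1/k and agent 2 value each even vertex at 1/k. The unconstrained optimal utilitarian welfare is 2, while every connected allocation to two agents (a partition of the cycle into at most two arcs) has utilitarian welfare at most (k+1)/k. Hence the utilitarian PoC of the cycle on 2k vertices is at least 2k/(k+1). -/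
/-!
A connected bundle is an arc of the cycle, and only the last vertex of an arc has its successor
outside it. On an even cycle odd and even vertices alternate, so every odd vertex of an arc except
possibly the last is followed by an even vertex of the same arc: an arc contains at most one more
odd than even vertex. Hence agent 0 gets the even vertices of `B 0` and agent 1 at most one more
than the even vertices of `B 1`, together at most `k + 1` vertices worth `1/k` each, whereas
handing all even vertices to agent 0 and all odd ones to agent 1 realises all `2k` of them.
-/

open Finset

lemma isAlloc_two_iff {V : Type*} [Fintype V] [DecidableEq V] {A : Fin 2 → Finset V} :
    IsAlloc A ↔ Disjoint (A 0) (A 1) ∧ A 0 ∪ A 1 = univ := by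
  simp [IsAlloc, Fin.forall_fin_two, disjoint_comm, Fin.univ_succ]

namespace Fin
variable {m : ℕ} [NeZero m]

lemma val_add_one_of_ne_zero {y : Fin m} (h : y + 1 ≠ 0) : (y + 1).val = y.val + 1 := by
  obtain ⟨n, rfl⟩ := Nat.exists_eq_succ_of_ne_zero (NeZero.ne m)
  rw [Fin.val_add_one, if_neg]
  rintro rfl
  simp at h

lemma val_add_one_sub {t x : Fin m} (h : x + 1 ≠ t) : (x + 1 - t).val = (x - t).val + 1 := by
  rw [add_sub_right_comm, val_add_one_of_ne_zero]
  rwa [← add_sub_right_comm, sub_ne_zero]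

lemma val_neg_one : (-1 : Fin m).val = m - 1 := by
  obtain ⟨n, rfl⟩ := Nat.exists_eq_succ_of_ne_zero (NeZero.ne m)
  simp [Fin.coe_neg_one]

lemma val_add_one_mod_two (hm : 2 ∣ m) (v : Fin m) : (v + 1).val % 2 = (v.val + 1) % 2 := by
  rw [Fin.val_add, Fin.val_one', Nat.add_mod_mod, Nat.mod_mod_of_dvd _ hm]

end Fin

section cycle
variable {m : ℕ} [NeZero m]

lemma eq_add_one_or_eq_add_one_of_cycleGraph_adj {x y : Fin m} (h : (cycleGraph m).Adj x y) :
    y = x + 1 ∨ x = y + 1 := by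
  obtain ⟨-, h | h⟩ := h
  · left; ext; rw [Fin.val_add, Fin.val_one', Nat.add_mod_mod, h]
  · right; ext; rw [Fin.val_add, Fin.val_one', Nat.add_mod_mod, h]

/-- Measuring positions by the distance `(v - t).val` travelled from a vertex `t ∉ S`,
the arc `S` becomes an interval of `{1, …, m - 1}`; a second exit `b` would leave the
interval at `b + 1`. -/
lemma eq_of_add_one_notMem_of_connected {S : Finset (Fin m)}
    (hS : ((cycleGraph m).induce (S : Set (Fin m))).Connected) {a b : Fin m}
    (ha : a ∈ S) (hb : b ∈ S) (ha' : a + 1 ∉ S) (hb' : b + 1 ∉ S) : a = b := by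
  by_contra hab
  set t := a + 1
  have hne : ∀ v ∈ S, v ≠ t := fun v hv hvt => ha' (hvt ▸ hv)
  have hb_lt : (b - t).val < (a - t).val := by
    have hbt : b + 1 ≠ t := fun h => hab (add_right_cancel h).symm
    have hat : a - t = -1 := by simp [t]
    have := (b + 1 - t).isLt
    rw [Fin.val_add_one_sub hbt] at this
    rw [hat, Fin.val_neg_one]
    omega
  obtain ⟨q⟩ := hS.preconnected ⟨b, hb⟩ ⟨a, ha⟩
  obtain ⟨⟨⟨⟨x, hxS⟩, ⟨y, hyS⟩⟩, hxy⟩, -, hx, hy⟩ :=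
    q.exists_boundary_dart {v | (v.1 - t).val ≤ (b - t).val} (le_refl (b - t).val)
      (not_le.2 hb_lt)
  replace hx : (x - t).val ≤ (b - t).val := hx
  replace hy : (b - t).val < (y - t).val := not_le.1 hy
  replace hxy : (cycleGraph m).Adj x y := hxy
  rcases eq_add_one_or_eq_add_one_of_cycleGraph_adj hxy with rfl | rfl
  · rw [Fin.val_add_one_sub (hne _ hyS)] at hy
    have : x = b := sub_left_inj.1 (Fin.ext (by omega) : x - t = b - t)
    exact hb' (this ▸ hyS)
  · rw [Fin.val_add_one_sub (hne _ hxS)] at hx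
    omega

lemma card_filter_add_one_notMem_le_one {S : Finset (Fin m)} (hS : ConnB (cycleGraph m) S) :
    #{v ∈ S | v + 1 ∉ S} ≤ 1 := by
  rcases hS with rfl | hS
  · simp
  · refine card_le_one.2 fun a ha b hb => ?_
    rw [mem_filter] at ha hb
    exact eq_of_add_one_notMem_of_connected hS ha.1 hb.1 ha.2 hb.2

end cycle

section parity

lemma disjoint_filter_mod_two {α : Type*} (S : Finset α) (f : α → ℕ) :
    Disjoint {x ∈ S | f x % 2 = 0} {x ∈ S | f x % 2 = 1} :=
  disjoint_filter.2 fun _ _ h0 h1 => by omega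

lemma filter_mod_two_union {α : Type*} [DecidableEq α] (S : Finset α) (f : α → ℕ) :
    {x ∈ S | f x % 2 = 0} ∪ {x ∈ S | f x % 2 = 1} = S := by
  rw [← filter_or]
  exact filter_true_of_mem fun x _ => by omega

variable {m : ℕ} [NeZero m]

lemma card_filter_val_mod_two_eq (hm : 2 ∣ m) :
    #{v : Fin m | v.val % 2 = 0} = m / 2 ∧ #{v : Fin m | v.val % 2 = 1} = m / 2 := by
  have hshift : #{v : Fin m | v.val % 2 = 0} = #{v : Fin m | v.val % 2 = 1} :=
    card_equiv (Equiv.addRight 1) fun v => by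
      simp only [mem_filter, mem_univ, true_and, Equiv.coe_addRight, Fin.val_add_one_mod_two hm]
      omega
  have htotal := card_union_of_disjoint (disjoint_filter_mod_two (univ : Finset (Fin m)) Fin.val)
  rw [filter_mod_two_union, card_univ, Fintype.card_fin] at htotal
  omega

lemma card_filter_odd_le_card_filter_even_add_one (hm : 2 ∣ m) {S : Finset (Fin m)}
    (hS : ConnB (cycleGraph m) S) :
    #{v ∈ S | v.val % 2 = 1} ≤ #{v ∈ S | v.val % 2 = 0} + 1 := by
  have hfollowed : #{v ∈ S | v.val % 2 = 1 ∧ v + 1 ∈ S} ≤ #{v ∈ S | v.val % 2 = 0} := by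
    refine card_le_card_of_injOn (· + 1) (fun v hv => ?_) (add_left_injective 1).injOn
    simp only [coe_filter, Set.mem_ofPred_eq] at hv ⊢
    exact ⟨hv.2.2, by rw [Fin.val_add_one_mod_two hm]; omega⟩
  calc #{v ∈ S | v.val % 2 = 1}
      ≤ #({v ∈ S | v.val % 2 = 1 ∧ v + 1 ∈ S} ∪ {v ∈ S | v + 1 ∉ S}) :=
        card_le_card fun v hv => by simp only [mem_union, mem_filter] at hv ⊢; tauto
    _ ≤ #{v ∈ S | v.val % 2 = 1 ∧ v + 1 ∈ S} + #{v ∈ S | v + 1 ∉ S} := card_union_le _ _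
    _ ≤ #{v ∈ S | v.val % 2 = 0} + 1 :=
        add_le_add hfollowed (card_filter_add_one_notMem_le_one hS)

end parity

/-- on a cycle with `2k` vertices where agent 0 values the `k` even-indexed
vertices at `1/k` each and agent 1 values the `k` odd-indexed vertices at `1/k` each, some
allocation has utilitarian welfare `2`, while every connected allocation has utilitarian
welfare at most `(k+1)/k`.  Hence the utilitarian price of connectivity of the cycle on `2k`
vertices is at least `2k/(k+1)`. -/
theorem util_poc_even_cycle_lower (k : ℕ) (hk : 1 ≤ k)
    (u : Fin 2 → Fin (2 * k) → ℝ)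
    (hu0 : ∀ v : Fin (2 * k), u 0 v = if v.val % 2 = 0 then ((k : ℝ))⁻¹ else 0)
    (hu1 : ∀ v : Fin (2 * k), u 1 v = if v.val % 2 = 1 then ((k : ℝ))⁻¹ else 0) :
    (∃ A : Fin 2 → Finset (Fin (2 * k)), IsAlloc A ∧ ∑ i, ∑ v ∈ A i, u i v = 2) ∧
    (∀ B : Fin 2 → Finset (Fin (2 * k)), IsAlloc B →
      (∀ i, ConnB (cycleGraph (2 * k)) (B i)) →
      ∑ i, ∑ v ∈ B i, u i v ≤ ((k : ℝ) + 1) / k) := by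
  have : NeZero (2 * k) := ⟨by omega⟩
  have hm : 2 ∣ 2 * k := dvd_mul_right 2 k
  have hk0 : (k : ℝ) ≠ 0 := Nat.cast_ne_zero.2 (by omega)
  have hbundle : ∀ (w : Fin (2 * k) → ℝ) (r : ℕ),
      (∀ v, w v = if v.val % 2 = r then (k : ℝ)⁻¹ else 0) →
      ∀ S : Finset (Fin (2 * k)), ∑ v ∈ S, w v = #{v ∈ S | v.val % 2 = r} / k := by
    intro w r hw S
    simp only [hw, sum_ite, sum_const_zero, add_zero, sum_const, nsmul_eq_mul, div_eq_mul_inv]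
  obtain ⟨hevens, hodds⟩ := card_filter_val_mod_two_eq hm
  rw [Nat.mul_div_cancel_left k two_pos] at hevens hodds
  refine ⟨⟨![univ.filter fun v => v.val % 2 = 0, univ.filter fun v => v.val % 2 = 1],
    isAlloc_two_iff.2 ⟨disjoint_filter_mod_two _ _, filter_mod_two_union _ _⟩, ?_⟩,
    fun B hB hconn => ?_⟩
  · rw [Fin.sum_univ_two, hbundle _ 0 hu0, hbundle _ 1 hu1]
    simp only [Matrix.cons_val_zero, Matrix.cons_val_one, Matrix.cons_val_fin_one, filter_filter,
      and_self, hevens, hodds, div_self hk0]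
    norm_num
  · obtain ⟨hdisj, hunion⟩ := isAlloc_two_iff.1 hB
    have hevens_split : #{v ∈ B 0 | v.val % 2 = 0} + #{v ∈ B 1 | v.val % 2 = 0} = k := by
      rw [← card_union_of_disjoint (disjoint_filter_filter hdisj), ← filter_union, hunion,
        hevens]
    have hodd := card_filter_odd_le_card_filter_even_add_one hm (hconn 1)
    rw [Fin.sum_univ_two, hbundle _ 0 hu0, hbundle _ 1 hu1, ← add_div]
    refine div_le_div_of_nonneg_right ?_ (Nat.cast_nonneg k)
    have hcount : #{v ∈ B 0 | v.val % 2 = 0} + #{v ∈ B 1 | v.val % 2 = 1} ≤ k + 1 := by omega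
    exact_mod_cast hcount
end
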